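/- arXiv:2101.11850 — 7 statements merged into one kernel-verified Lean document; each statement's English description precedes it below -/
import Mathlib

section
/- Let n ≥ 1, y ∈ ℝⁿ, τ ∈ ℝⁿ with τ_i > 0, and λ ≥ 0. A vector u ∈ ℝⁿ minimizes F(·, y, τ, λ) if and only if there exists z ∈ ℝ^{n+1} with z_0 = z_n = 0 such that |z_k| ≤ λ/2 for all k ∈ {1,…,n−1}, z_k = (λ/2)·sign(u_{k+1} − u_k) whenever u_{k+1} ≠ u_k, and τ_i (u_i − y_i) = z_i − z_{i−1} for every i ∈ {1,…,n}. -/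
/-!
Along a segment `s ↦ u + s • (v - u)`, `F` is a quadratic in `s` plus the convex function
`λ · tv`, so `u` is a minimizer iff the first-order variational inequality
`0 ≤ 2 ⟨τ (u - y), v - u⟩ + λ (tv v - tv u)` holds for every `v`.  Write `τ (u - y)` as the
discrete derivative of its partial sums `z` and sum by parts.  Testing with constant shifts forces
`z_{n+1} = 0`; testing with a step `u + t · 1_{≤ k}`, which changes only the jump `u_{k+1} - u_k`,
shows that `z_{k+1}` is a subgradient of `(λ/2)|·|` at that jump, which is exactly the bound and
sign condition.  Conversely, the edgewise subgradient inequalities sum to the variational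
inequality.
-/

/-- The weighted total-variation functional
`F(u, y, τ, λ) = Σ_{i=1}^n τ_i (y_i − u_i)² + λ Σ_{i=1}^{n−1} |u_{i+1} − u_i|`
for a signal with `n + 1` samples (indexed by `Fin (n+1)`, so that the number
of samples is an arbitrary integer `≥ 1`). -/
noncomputable def tvF (n : ℕ) (y τ : Fin (n + 1) → ℝ) (lam : ℝ)
    (u : Fin (n + 1) → ℝ) : ℝ :=
  (∑ i : Fin (n + 1), τ i * (y i - u i) ^ 2) +
    lam * ∑ i : Fin n, |u i.succ - u i.castSucc|

open Finset Filter Topology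

theorem nonneg_of_forall_mul_add_sq_mul_nonneg {c T : ℝ}
    (h : ∀ s ∈ Set.Ioo (0 : ℝ) 1, 0 ≤ s * c + s ^ 2 * T) : 0 ≤ c := by
  have hlim : Tendsto (fun s => c + s * T) (𝓝[>] 0) (𝓝 c) := by
    have : Tendsto (fun s : ℝ => c + s * T) (𝓝 0) (𝓝 (c + 0 * T)) :=
      (continuous_const.add (continuous_id.mul continuous_const)).tendsto 0
    simpa using this.mono_left nhdsWithin_le_nhds
  refine ge_of_tendsto hlim ?_
  filter_upwards [Ioo_mem_nhdsGT one_pos] with s hs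
  have := h s hs
  exact (mul_nonneg_iff_of_pos_left hs.1).1 (by linarith)

def IsSubgradient (f : ℝ → ℝ) (d w : ℝ) : Prop :=
  ∀ e, f d + w * (e - d) ≤ f e

theorem isSubgradient_const_mul_abs_iff {c d w : ℝ} :
    IsSubgradient (fun x => c * |x|) d w ↔ |w| ≤ c ∧ (d ≠ 0 → w = c * Real.sign d) := by
  simp only [IsSubgradient]
  constructor
  · intro h
    have h0 := h 0
    have h2 := h (2 * d)
    have hn := h (-d)
    simp only [abs_zero, abs_neg, abs_mul, abs_two] at h0 h2 hn
    rcases lt_trichotomy d 0 with hd | rfl | hd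
    · rw [abs_of_neg hd] at h0 h2 hn
      have hw : w = -c := by nlinarith
      have hc : 0 ≤ c := by nlinarith
      rw [Real.sign_of_neg hd, hw, abs_neg, abs_of_nonneg hc]
      exact ⟨le_rfl, fun _ => by ring⟩
    · have hp := h 1
      have hm := h (-1)
      norm_num at hp hm
      exact ⟨abs_le.2 ⟨by linarith, hp⟩, fun h => absurd rfl h⟩
    · rw [abs_of_pos hd] at h0 h2 hn
      have hw : w = c := by nlinarith
      have hc : 0 ≤ c := by nlinarith
      rw [Real.sign_of_pos hd, hw, abs_of_nonneg hc]
      exact ⟨le_rfl, fun _ => by ring⟩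
  · rintro ⟨hw, hsign⟩ e
    have hc : 0 ≤ c := (abs_nonneg w).trans hw
    rcases lt_trichotomy d 0 with hd | rfl | hd
    · rw [hsign hd.ne, Real.sign_of_neg hd, abs_of_neg hd]
      nlinarith [neg_abs_le e]
    · rw [abs_zero, mul_zero, zero_add, sub_zero]
      calc w * e ≤ |w| * |e| := by rw [← abs_mul]; exact le_abs_self _
        _ ≤ c * |e| := by gcongr
    · rw [hsign hd.ne', Real.sign_of_pos hd, abs_of_pos hd]
      nlinarith [le_abs_self e]

namespace Fin

variable {R : Type*} [CommRing R] {n : ℕ}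

theorem sum_univ_by_parts (z : Fin (n + 2) → R) (h : Fin (n + 1) → R) :
    ∑ i, (z i.succ - z i.castSucc) * h i =
      z (last (n + 1)) * h (last n) - z 0 * h 0 -
        ∑ k : Fin n, z k.succ.castSucc * (h k.succ - h k.castSucc) := by
  simp only [sub_mul, mul_sub, sum_sub_distrib]
  rw [sum_univ_castSucc (fun i => z i.succ * h i), sum_univ_succ (fun i => z i.castSucc * h i)]
  simp only [succ_castSucc, succ_last, castSucc_zero]
  ring

theorem indicator_Iic_castSucc_succ_sub (j k : Fin n) :
    (Set.Iic k.castSucc).indicator (1 : Fin (n + 1) → R) j.succ -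
      (Set.Iic k.castSucc).indicator 1 j.castSucc = if j = k then -1 else 0 := by
  simp only [Set.indicator_apply, Set.mem_Iic, succ_le_castSucc_iff, castSucc_le_castSucc_iff,
    Pi.one_apply]
  rcases lt_trichotomy j k with h | rfl | h
  · simp [h, h.le, h.ne]
  · simp
  · simp [h.not_gt, h.not_ge, h.ne']

theorem sum_sub_mul_indicator_Iic (z : Fin (n + 2) → R) (hz₀ : z 0 = 0) (k : Fin n) :
    ∑ i, (z i.succ - z i.castSucc) * (Set.Iic k.castSucc).indicator 1 i = z k.succ.castSucc := by
  rw [sum_univ_by_parts]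
  simp [indicator_Iic_castSucc_succ_sub, hz₀]

end Fin

section TotalVariation

variable {n : ℕ}

def tv (u : Fin (n + 1) → ℝ) : ℝ :=
  ∑ k : Fin n, |u k.succ - u k.castSucc|

theorem tv_add_const (u : Fin (n + 1) → ℝ) (t : ℝ) : tv (fun i => u i + t) = tv u := by
  simp only [tv, add_sub_add_right_eq_sub]

theorem tv_add_smul_indicator_Iic (u : Fin (n + 1) → ℝ) (k : Fin n) (t : ℝ) :
    tv (u + t • (Set.Iic k.castSucc).indicator (1 : Fin (n + 1) → ℝ)) =
      tv u - |u k.succ - u k.castSucc| + |u k.succ - u k.castSucc - t| := by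
  set p := (Set.Iic k.castSucc).indicator (1 : Fin (n + 1) → ℝ)
  have hdiff (j : Fin n) : |(u + t • p) j.succ - (u + t • p) j.castSucc| =
      |u j.succ - u j.castSucc| +
        if j = k then |u k.succ - u k.castSucc - t| - |u k.succ - u k.castSucc| else 0 := by
    have hp : p j.succ - p j.castSucc = if j = k then -1 else 0 :=
      Fin.indicator_Iic_castSucc_succ_sub j k
    rw [Pi.add_apply, Pi.add_apply, add_sub_add_comm, Pi.smul_apply, Pi.smul_apply,
      smul_eq_mul, smul_eq_mul, ← mul_sub, hp]
    split_ifs with hjk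
    · subst hjk; ring_nf
    · simp
  simp only [tv, hdiff, sum_add_distrib, sum_ite_eq', mem_univ, if_true]
  ring

theorem tv_add_smul_sub_le (u v : Fin (n + 1) → ℝ) {s : ℝ} (hs₀ : 0 ≤ s) (hs₁ : s ≤ 1) :
    tv (u + s • (v - u)) ≤ tv u + s * (tv v - tv u) := by
  simp only [tv, mul_sub, mul_sum, ← sum_sub_distrib, ← sum_add_distrib]
  refine sum_le_sum fun k _ => ?_
  simp only [Pi.add_apply, Pi.smul_apply, Pi.sub_apply, smul_eq_mul]
  calc |u k.succ + s * (v k.succ - u k.succ) - (u k.castSucc + s * (v k.castSucc - u k.castSucc))|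
      = |(1 - s) * (u k.succ - u k.castSucc) + s * (v k.succ - v k.castSucc)| := by ring_nf
    _ ≤ |(1 - s) * (u k.succ - u k.castSucc)| + |s * (v k.succ - v k.castSucc)| := abs_add_le _ _
    _ = _ := by
      rw [abs_mul, abs_mul, abs_of_nonneg hs₀, abs_of_nonneg (sub_nonneg.2 hs₁)]
      ring

theorem tvF_sub_tvF (y τ : Fin (n + 1) → ℝ) (lam : ℝ) (u v : Fin (n + 1) → ℝ) :
    tvF n y τ lam v - tvF n y τ lam u =
      2 * ∑ i, τ i * (u i - y i) * (v i - u i) + ∑ i, τ i * (v i - u i) ^ 2 +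
        lam * (tv v - tv u) := by
  have hquad (i : Fin (n + 1)) : τ i * (y i - v i) ^ 2 - τ i * (y i - u i) ^ 2 =
      2 * (τ i * (u i - y i) * (v i - u i)) + τ i * (v i - u i) ^ 2 := by ring
  calc tvF n y τ lam v - tvF n y τ lam u
      = ∑ i, (τ i * (y i - v i) ^ 2 - τ i * (y i - u i) ^ 2) + lam * (tv v - tv u) := by
        unfold tvF tv; rw [sum_sub_distrib]; ring
    _ = _ := by simp only [hquad, sum_add_distrib, ← mul_sum]

theorem tvF_add_smul_sub_sub_le (y τ : Fin (n + 1) → ℝ) {lam : ℝ} (hlam : 0 ≤ lam)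
    (u v : Fin (n + 1) → ℝ) {s : ℝ} (hs₀ : 0 ≤ s) (hs₁ : s ≤ 1) :
    tvF n y τ lam (u + s • (v - u)) - tvF n y τ lam u ≤
      s * (2 * ∑ i, τ i * (u i - y i) * (v i - u i) + lam * (tv v - tv u)) +
        s ^ 2 * ∑ i, τ i * (v i - u i) ^ 2 := by
  have hstep (i : Fin (n + 1)) : (u + s • (v - u)) i - u i = s * (v i - u i) := by simp
  have hlin : ∑ i, τ i * (u i - y i) * (s * (v i - u i)) =
      s * ∑ i, τ i * (u i - y i) * (v i - u i) := by
    rw [mul_sum]; exact sum_congr rfl fun i _ => by ring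
  have hquad : ∑ i, τ i * (s * (v i - u i)) ^ 2 = s ^ 2 * ∑ i, τ i * (v i - u i) ^ 2 := by
    rw [mul_sum]; exact sum_congr rfl fun i _ => by ring
  have hconv := mul_le_mul_of_nonneg_left (tv_add_smul_sub_le u v hs₀ hs₁) hlam
  rw [tvF_sub_tvF]
  simp only [hstep, hlin, hquad]
  linarith

theorem forall_tvF_le_iff (y : Fin (n + 1) → ℝ) {τ : Fin (n + 1) → ℝ} (hτ : ∀ i, 0 ≤ τ i)
    {lam : ℝ} (hlam : 0 ≤ lam) (u : Fin (n + 1) → ℝ) :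
    (∀ v, tvF n y τ lam u ≤ tvF n y τ lam v) ↔
      ∀ v, 0 ≤ 2 * ∑ i, τ i * (u i - y i) * (v i - u i) + lam * (tv v - tv u) := by
  constructor
  · intro h v
    refine nonneg_of_forall_mul_add_sq_mul_nonneg (T := ∑ i, τ i * (v i - u i) ^ 2) fun s hs => ?_
    exact (sub_nonneg.2 (h _)).trans (tvF_add_smul_sub_sub_le y τ hlam u v hs.1.le hs.2.le)
  · intro h v
    have hquad : 0 ≤ ∑ i, τ i * (v i - u i) ^ 2 :=
      sum_nonneg fun i _ => mul_nonneg (hτ i) (sq_nonneg _)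
    linarith [h v, tvF_sub_tvF y τ lam u v]

theorem certificate_of_variational {lam : ℝ} (u : Fin (n + 1) → ℝ) (z : Fin (n + 2) → ℝ)
    (hz₀ : z 0 = 0)
    (h : ∀ v, 0 ≤ 2 * ∑ i, (z i.succ - z i.castSucc) * (v i - u i) + lam * (tv v - tv u)) :
    z (Fin.last (n + 1)) = 0 ∧ ∀ k : Fin n,
      IsSubgradient (fun x => lam / 2 * |x|) (u k.succ - u k.castSucc) (z k.succ.castSucc) := by
  constructor
  · have hshift (t : ℝ) : 0 ≤ t * z (Fin.last (n + 1)) := by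
      have := h (fun i => u i + t)
      simp only [add_sub_cancel_left, tv_add_const, sub_self, mul_zero, add_zero,
        Fin.sum_univ_by_parts, hz₀, zero_mul, sub_zero, sum_const_zero] at this
      linarith
    linarith [hshift 1, hshift (-1)]
  · intro k e
    have hv := h (u + (u k.succ - u k.castSucc - e) • (Set.Iic k.castSucc).indicator 1)
    simp only [Pi.add_apply, Pi.smul_apply, smul_eq_mul, add_sub_cancel_left, mul_left_comm _
      (u k.succ - u k.castSucc - e), ← mul_sum, Fin.sum_sub_mul_indicator_Iic z hz₀ k,
      tv_add_smul_indicator_Iic, sub_sub_cancel] at hv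
    show lam / 2 * |u k.succ - u k.castSucc| + _ ≤ lam / 2 * |e|
    linarith

theorem variational_of_certificate {lam : ℝ} (u : Fin (n + 1) → ℝ) (z : Fin (n + 2) → ℝ)
    (hz₀ : z 0 = 0) (hz_last : z (Fin.last (n + 1)) = 0)
    (hsub : ∀ k : Fin n,
      IsSubgradient (fun x => lam / 2 * |x|) (u k.succ - u k.castSucc) (z k.succ.castSucc))
    (v : Fin (n + 1) → ℝ) :
    0 ≤ 2 * ∑ i, (z i.succ - z i.castSucc) * (v i - u i) + lam * (tv v - tv u) := by
  have hedge (k : Fin n) :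
      2 * (z k.succ.castSucc * (v k.succ - u k.succ - (v k.castSucc - u k.castSucc))) ≤
        lam * |v k.succ - v k.castSucc| - lam * |u k.succ - u k.castSucc| := by
    have := hsub k (v k.succ - v k.castSucc)
    simp only at this
    linarith
  have := sum_le_sum fun k (_ : k ∈ univ) => hedge k
  rw [← mul_sum, sum_sub_distrib, ← mul_sum, ← mul_sum] at this
  rw [Fin.sum_univ_by_parts, hz₀, hz_last]
  unfold tv
  linarith

end TotalVariation

/-- Optimality characterization: `u` minimizes `F(·, y, τ, λ)` iff there is a dual
vector `z` (with one entry per "position" `0, …, n+1`, the entry `z_{k+1}` being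
attached to the adjacent pair `(k, k+1)` of sample indices) such that
`z_0 = z_{last} = 0`, `|z_k| ≤ λ/2` at every interior position,
`z_{k+1} = (λ/2)·sign(u_{k+1} − u_k)` whenever `u_{k+1} ≠ u_k`, and
`τ_i (u_i − y_i) = z_{i+1} − z_i` for every sample index `i`.
(`Real.sign x` is `1` for `x > 0`, `-1` for `x < 0` and `0` for `x = 0`.) -/
theorem tv_minimizer_iff_dual_certificate (n : ℕ) (y τ : Fin (n + 1) → ℝ)
    (hτ : ∀ i, 0 < τ i) (lam : ℝ) (hlam : 0 ≤ lam) (u : Fin (n + 1) → ℝ) :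
    (∀ v : Fin (n + 1) → ℝ, tvF n y τ lam u ≤ tvF n y τ lam v) ↔
      ∃ z : Fin (n + 2) → ℝ,
        z 0 = 0 ∧
        z (Fin.last (n + 1)) = 0 ∧
        (∀ k : Fin n, |z k.succ.castSucc| ≤ lam / 2) ∧
        (∀ k : Fin n, u k.succ ≠ u k.castSucc →
          z k.succ.castSucc = lam / 2 * Real.sign (u k.succ - u k.castSucc)) ∧
        (∀ i : Fin (n + 1), τ i * (u i - y i) = z i.succ - z i.castSucc) := by
  rw [forall_tvF_le_iff y (fun i => (hτ i).le) hlam]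
  constructor
  · intro h
    obtain ⟨z, hz₀, hz⟩ : ∃ z : Fin (n + 2) → ℝ,
        z 0 = 0 ∧ ∀ i, τ i * (u i - y i) = z i.succ - z i.castSucc :=
      ⟨Fin.partialSum fun i => τ i * (u i - y i), Fin.partialSum_zero _,
        fun i => by simp [Fin.partialSum_succ]⟩
    simp only [hz] at h
    obtain ⟨hz_last, hsub⟩ := certificate_of_variational u z hz₀ h
    exact ⟨z, hz₀, hz_last, fun k => (isSubgradient_const_mul_abs_iff.1 (hsub k)).1,
      fun k hk => (isSubgradient_const_mul_abs_iff.1 (hsub k)).2 (sub_ne_zero.2 hk), hz⟩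
  · rintro ⟨z, hz₀, hz_last, hbound, hsign, hz⟩
    simp only [hz]
    exact variational_of_certificate u z hz₀ hz_last fun k =>
      isSubgradient_const_mul_abs_iff.2 ⟨hbound k, fun hk => hsign k (sub_ne_zero.1 hk)⟩
end

section
/- Let n ≥ 1, y ∈ ℝⁿ, τ ∈ ℝⁿ with τ_i > 0, λ ≥ 0, and let u*(λ) be the unique minimizer of F(·, y, τ, λ). For every segment index j ∈ {1,…,K(λ)}, the common value of u*(λ) on the j-th segment satisfies v*_j(λ) = ȳ*_j + (λ / (2 T_j)) (s*_j − s*_{j−1}), where T_j = Σ_{i∈N_j(λ)} τ_i, ȳ*_j = (Σ_{i∈N_j(λ)} τ_i y_i)/T_j, s*_j = sign(v*_{j+1}(λ) − v*_j(λ)) for 1 ≤ j ≤ K(λ)−1, and s*_0 = s*_{K(λ)} = 0. -/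
set_option maxHeartbeats 1000000

/-- `Σ_{i = a}^{b} f i` over sample indices (as natural numbers). -/
noncomputable def segWSum (n : ℕ) (f : Fin (n + 1) → ℝ) (a b : ℕ) : ℝ :=
  ∑ i : Fin (n + 1), if a ≤ (i : ℕ) ∧ (i : ℕ) ≤ b then f i else 0

lemma abs_add_mul_sign (d t : ℝ) (hd : d ≠ 0) (ht : |t| < |d|) :
    |d + t| = |d| + Real.sign d * t := by
  rcases lt_or_gt_of_ne hd with h | h
  · rw [Real.sign_of_neg h, abs_of_neg h] at *
    rw [abs_of_neg (by cases abs_lt.mp ht; linarith)]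
    ring
  · rw [Real.sign_of_pos h, abs_of_pos h] at *
    rw [abs_of_pos (by cases abs_lt.mp ht; linarith)]
    ring

lemma tvCaseC (x w t : ℝ) (hd : x - w ≠ 0) (ht : |t| < |x - w|) :
    |x + t - (w + 0)| = |x - w| + (Real.sign (x - w) - 0) * t := by
  have h := abs_add_mul_sign (x - w) t hd ht
  rw [show x + t - (w + 0) = x - w + t from by ring, h]; ring

lemma tvCaseD (x w t : ℝ) (hd : x - w ≠ 0) (ht : |t| < |x - w|) :
    |x + 0 - (w + t)| = |x - w| + (0 - Real.sign (x - w)) * t := by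
  have h := abs_add_mul_sign (x - w) (-t) hd (by rwa [abs_neg])
  rw [show x + 0 - (w + t) = x - w + -t from by ring, h]; ring

lemma tvCaseB (x w t : ℝ) : |x + t - (w + t)| = |x - w| + (0 - 0) * t := by
  rw [show x + t - (w + t) = x - w from by ring]; ring

lemma tvCaseA (x w t : ℝ) : |x + 0 - (w + 0)| = |x - w| + (0 - 0) * t := by
  rw [show x + 0 - (w + 0) = x - w from by ring]; ring

/-- The shifted signal: add `t` on the indices in `{a, …, b}`. -/
noncomputable def pertU (n a b : ℕ) (u : Fin (n + 1) → ℝ) (t : ℝ) :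
    Fin (n + 1) → ℝ :=
  fun i => u i + (if a ≤ (i : ℕ) ∧ (i : ℕ) ≤ b then t else 0)

/-- Formula for the level of a segment of the minimizer: if the minimizer `u` of
`F(·, y, τ, λ)` is constant on the (maximal) set of consecutive indices `{a, …, b}`,
then its common value there is
`v = ȳ + (λ / (2T)) (s_right − s_left)` where `T = Σ_{i=a}^{b} τ_i`,
`ȳ = (Σ_{i=a}^{b} τ_i y_i)/T`, `s_right = sign(u_{b+1} − u_b)` (or `0` if `b` is the
last index) and `s_left = sign(u_a − u_{a−1})` (or `0` if `a` is the first index). -/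
theorem tv_segment_level (n : ℕ) (y τ : Fin (n + 1) → ℝ) (hτ : ∀ i, 0 < τ i)
    (lam : ℝ) (hlam : 0 ≤ lam) (u : Fin (n + 1) → ℝ)
    (hmin : ∀ v : Fin (n + 1) → ℝ, tvF n y τ lam u ≤ tvF n y τ lam v)
    (a b : ℕ) (hab : a ≤ b) (hb : b ≤ n)
    (hconst : ∀ i : ℕ, a ≤ i → ∀ hi : i ≤ b, u ⟨i, by omega⟩ = u ⟨a, by omega⟩)
    (hleft : 0 < a → u ⟨a - 1, by omega⟩ ≠ u ⟨a, by omega⟩)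
    (hright : ∀ hbn : b < n, u ⟨b + 1, by omega⟩ ≠ u ⟨b, by omega⟩) :
    u ⟨a, by omega⟩ =
      segWSum n (fun i => τ i * y i) a b / segWSum n τ a b +
        lam / (2 * segWSum n τ a b) *
          ((if hbn : b < n then Real.sign (u ⟨b + 1, by omega⟩ - u ⟨b, by omega⟩) else 0) -
            (if 0 < a then Real.sign (u ⟨a, by omega⟩ - u ⟨a - 1, by omega⟩) else 0)) := by
  classical
  have han : a ≤ n := hab.trans hb
  set T : ℝ := segWSum n τ a b with hTdef
  set S : ℝ := segWSum n (fun i => τ i * y i) a b with hSdef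
  set v : ℝ := u ⟨a, by omega⟩ with hvdef
  set sR : ℝ :=
    (if hbn : b < n then Real.sign (u ⟨b + 1, by omega⟩ - u ⟨b, by omega⟩) else 0) with hsR
  set sL : ℝ :=
    (if 0 < a then Real.sign (v - u ⟨a - 1, by omega⟩) else 0) with hsL
  clear_value T S v sR sL
  -- positivity of T
  have hT : 0 < T := by
    rw [hTdef]
    unfold segWSum
    apply Finset.sum_pos'
    · intro i _
      split_ifs with h
      · exact (hτ i).le
      · exact le_rfl
    · refine ⟨⟨a, by omega⟩, Finset.mem_univ _, ?_⟩
      rw [if_pos ⟨le_rfl, hab⟩]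
      exact hτ _
  -- the threshold ε
  set ε : ℝ := min
      (if h : 0 < a then |u ⟨a, by omega⟩ - u ⟨a - 1, by omega⟩| else 1)
      (if h : b < n then |u ⟨b + 1, by omega⟩ - u ⟨b, by omega⟩| else 1) with hεdef
  clear_value ε
  have hε : 0 < ε := by
    rw [hεdef]
    apply lt_min
    · split_ifs with h
      · have h' := hleft h
        rw [hvdef] at h'
        exact abs_pos.mpr (sub_ne_zero.mpr (Ne.symm h'))
      · norm_num
    · split_ifs with h
      · exact abs_pos.mpr (sub_ne_zero.mpr (hright h))
      · norm_num
  -- the two key sums, in raw form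
  have hS2 : (∑ i : Fin (n + 1),
      if a ≤ (i : ℕ) ∧ (i : ℕ) ≤ b then τ i * y i else 0) = S := by rw [hSdef]; rfl
  have hT2 : (∑ i : Fin (n + 1),
      if a ≤ (i : ℕ) ∧ (i : ℕ) ≤ b then τ i else 0) = T := by rw [hTdef]; rfl
  -- quadratic part expansion
  have hquad : ∀ t : ℝ,
      (∑ i : Fin (n + 1), τ i * (y i - pertU n a b u t i) ^ 2)
        = (∑ i : Fin (n + 1), τ i * (y i - u i) ^ 2)
          - S * (2 * t) + T * (2 * v * t + t ^ 2) := by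
    intro t
    have hterm : ∀ i : Fin (n + 1),
        τ i * (y i - pertU n a b u t i) ^ 2
          = τ i * (y i - u i) ^ 2
            - (if a ≤ (i : ℕ) ∧ (i : ℕ) ≤ b then τ i * y i else 0) * (2 * t)
            + (if a ≤ (i : ℕ) ∧ (i : ℕ) ≤ b then τ i else 0) * (2 * v * t + t ^ 2) := by
      intro i
      unfold pertU
      split_ifs with h
      · have hui : u i = v := by
          have h' := hconst i.val h.1 h.2
          rw [hvdef]
          simpa using h'
        rw [hui]; ring
      · ring
    calc (∑ i : Fin (n + 1), τ i * (y i - pertU n a b u t i) ^ 2)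
        = ∑ i : Fin (n + 1), (τ i * (y i - u i) ^ 2
            - (if a ≤ (i : ℕ) ∧ (i : ℕ) ≤ b then τ i * y i else 0) * (2 * t)
            + (if a ≤ (i : ℕ) ∧ (i : ℕ) ≤ b then τ i else 0) * (2 * v * t + t ^ 2)) :=
          Finset.sum_congr rfl fun i _ => hterm i
      _ = (∑ i : Fin (n + 1), τ i * (y i - u i) ^ 2)
            - (∑ i : Fin (n + 1),
                if a ≤ (i : ℕ) ∧ (i : ℕ) ≤ b then τ i * y i else 0) * (2 * t)
            + (∑ i : Fin (n + 1),
                if a ≤ (i : ℕ) ∧ (i : ℕ) ≤ b then τ i else 0) * (2 * v * t + t ^ 2) := by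
          simp only [Finset.sum_add_distrib, Finset.sum_sub_distrib, ← Finset.sum_mul]
      _ = (∑ i : Fin (n + 1), τ i * (y i - u i) ^ 2)
            - S * (2 * t) + T * (2 * v * t + t ^ 2) := by rw [hS2, hT2]
  -- pointwise TV expansion
  have hpt : ∀ t : ℝ, |t| < ε → ∀ i : Fin n,
      |pertU n a b u t i.succ - pertU n a b u t i.castSucc|
        = |u i.succ - u i.castSucc|
          + ((if (i : ℕ) + 1 = a then sL else 0)
              - (if (i : ℕ) = b then sR else 0)) * t := by
    intro t ht i
    unfold pertU
    simp only [Fin.val_succ, Fin.coe_castSucc]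
    by_cases h1 : (i : ℕ) + 1 = a
    · have ha : 0 < a := by omega
      have hnb : (i : ℕ) ≠ b := by omega
      rw [if_pos (by omega : a ≤ (i : ℕ) + 1 ∧ (i : ℕ) + 1 ≤ b),
          if_neg (by omega : ¬(a ≤ (i : ℕ) ∧ (i : ℕ) ≤ b)),
          if_pos h1, if_neg hnb]
      have e1 : i.succ = (⟨a, by omega⟩ : Fin (n + 1)) := by
        apply Fin.ext; simpa [Fin.val_succ] using h1
      have e0 : i.castSucc = (⟨a - 1, by omega⟩ : Fin (n + 1)) := by
        apply Fin.ext; simp [Fin.coe_castSucc]; omega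
      rw [e1, e0, hsL, if_pos ha, hvdef]
      have hd : u (⟨a, by omega⟩ : Fin (n + 1)) - u ⟨a - 1, by omega⟩ ≠ 0 := by
        have h' := hleft ha
        rw [hvdef] at h'
        exact sub_ne_zero.mpr (Ne.symm h')
      have hte : |t| < |u (⟨a, by omega⟩ : Fin (n + 1)) - u ⟨a - 1, by omega⟩| := by
        refine ht.trans_le ?_
        rw [hεdef]
        exact (min_le_left _ _).trans_eq (dif_pos ha)
      exact tvCaseC _ _ t hd hte
    · by_cases h2 : (i : ℕ) = b
      · have hbn : b < n := by omega
        rw [if_neg (by omega : ¬(a ≤ (i : ℕ) + 1 ∧ (i : ℕ) + 1 ≤ b)),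
            if_pos (by omega : a ≤ (i : ℕ) ∧ (i : ℕ) ≤ b),
            if_neg h1, if_pos h2]
        have e1 : i.succ = (⟨b + 1, by omega⟩ : Fin (n + 1)) := by
          apply Fin.ext; simpa [Fin.val_succ] using h2
        have e0 : i.castSucc = (⟨b, by omega⟩ : Fin (n + 1)) := by
          apply Fin.ext; simpa [Fin.coe_castSucc] using h2
        rw [e1, e0, hsR, dif_pos hbn]
        have hd : u (⟨b + 1, by omega⟩ : Fin (n + 1)) - u ⟨b, by omega⟩ ≠ 0 :=
          sub_ne_zero.mpr (hright hbn)
        have hte : |t| < |u (⟨b + 1, by omega⟩ : Fin (n + 1)) - u ⟨b, by omega⟩| := by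
          refine ht.trans_le ?_
          rw [hεdef]
          exact (min_le_right _ _).trans_eq (dif_pos hbn)
        exact tvCaseD _ _ t hd hte
      · rw [if_neg h1, if_neg h2]
        have hiff : (a ≤ (i : ℕ) + 1 ∧ (i : ℕ) + 1 ≤ b) ↔ (a ≤ (i : ℕ) ∧ (i : ℕ) ≤ b) := by
          omega
        by_cases h3 : a ≤ (i : ℕ) ∧ (i : ℕ) ≤ b
        · rw [if_pos (hiff.mpr h3), if_pos h3]
          exact tvCaseB _ _ t
        · rw [if_neg (fun h => h3 (hiff.mp h)), if_neg h3]
          exact tvCaseA _ _ t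
  -- summed TV expansion
  have hg1 : (∑ i : Fin n, (if (i : ℕ) + 1 = a then sL else 0)) = sL := by
    by_cases ha : 0 < a
    · rw [Finset.sum_eq_single (⟨a - 1, by omega⟩ : Fin n)]
      · rw [if_pos (by simp; omega)]
      · intro i _ hne
        rw [if_neg]
        intro hcontra
        exact hne (Fin.ext (by simp; omega))
      · intro h; exact absurd (Finset.mem_univ _) h
    · rw [hsL, if_neg ha]
      apply Finset.sum_eq_zero
      intro i _
      rw [if_neg (by omega)]
  have hg2 : (∑ i : Fin n, (if (i : ℕ) = b then sR else 0)) = sR := by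
    by_cases hbn : b < n
    · rw [Finset.sum_eq_single (⟨b, by omega⟩ : Fin n)]
      · rw [if_pos (by simp)]
      · intro i _ hne
        rw [if_neg]
        intro hcontra
        exact hne (Fin.ext (by simpa using hcontra))
      · intro h; exact absurd (Finset.mem_univ _) h
    · rw [hsR, dif_neg hbn]
      apply Finset.sum_eq_zero
      intro i _
      rw [if_neg (by omega)]
  have htv : ∀ t : ℝ, |t| < ε →
      (∑ i : Fin n, |pertU n a b u t i.succ - pertU n a b u t i.castSucc|)
        = (∑ i : Fin n, |u i.succ - u i.castSucc|) + (sL - sR) * t := by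
    intro t ht
    calc (∑ i : Fin n, |pertU n a b u t i.succ - pertU n a b u t i.castSucc|)
        = ∑ i : Fin n, (|u i.succ - u i.castSucc|
            + ((if (i : ℕ) + 1 = a then sL else 0)
                - (if (i : ℕ) = b then sR else 0)) * t) :=
          Finset.sum_congr rfl fun i _ => hpt t ht i
      _ = (∑ i : Fin n, |u i.succ - u i.castSucc|)
            + ((∑ i : Fin n, (if (i : ℕ) + 1 = a then sL else 0))
                - (∑ i : Fin n, (if (i : ℕ) = b then sR else 0))) * t := by
          simp only [Finset.sum_add_distrib, Finset.sum_sub_distrib, ← Finset.sum_mul]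
      _ = (∑ i : Fin n, |u i.succ - u i.castSucc|) + (sL - sR) * t := by
          rw [hg1, hg2]
  -- the key inequality
  have hineq : ∀ t : ℝ, |t| < ε →
      0 ≤ (-2 * (S - T * v) + lam * (sL - sR)) * t + T * t ^ 2 := by
    intro t ht
    have hE : tvF n y τ lam (pertU n a b u t)
        = tvF n y τ lam u + (-2 * (S - T * v) + lam * (sL - sR)) * t + T * t ^ 2 := by
      unfold tvF
      rw [hquad t, htv t ht]
      ring
    have := hmin (pertU n a b u t)
    rw [hE] at this
    linarith
  -- first-order condition: the linear coefficient vanishes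
  set c : ℝ := -2 * (S - T * v) + lam * (sL - sR) with hcdef
  clear_value c
  have hc : c = 0 := by
    by_contra hne
    rcases lt_or_gt_of_ne hne with hneg | hpos
    · set m : ℝ := min (ε / 2) (-c / (2 * T)) with hm
      have hm0 : 0 < m := by
        apply lt_min
        · linarith
        · exact div_pos (by linarith) (by positivity)
      have hmε : |m| < ε := by
        rw [abs_of_pos hm0]
        exact (min_le_left _ _).trans_lt (by linarith)
      have h2 : m ≤ -c / (2 * T) := min_le_right _ _
      have h2' : m * (2 * T) ≤ -c := (le_div_iff₀ (by positivity)).mp h2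
      have := hineq m hmε
      nlinarith [mul_pos hm0 hm0, mul_pos hT hm0]
    · set m : ℝ := min (ε / 2) (c / (2 * T)) with hm
      have hm0 : 0 < m := by
        apply lt_min
        · linarith
        · exact div_pos (by linarith) (by positivity)
      have hmε : |(-m)| < ε := by
        rw [abs_neg, abs_of_pos hm0]
        exact (min_le_left _ _).trans_lt (by linarith)
      have h2 : m ≤ c / (2 * T) := min_le_right _ _
      have h2' : m * (2 * T) ≤ c := (le_div_iff₀ (by positivity)).mp h2
      have := hineq (-m) hmε
      nlinarith [mul_pos hm0 hm0, mul_pos hT hm0]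
  -- conclude
  have hT' : T ≠ 0 := ne_of_gt hT
  rw [hcdef] at hc
  show v = S / T + lam / (2 * T) * (sR - sL)
  field_simp
  nlinarith [hc]
end

section
/- Let n ≥ 1, y ∈ ℝⁿ, and τ ∈ ℝⁿ with τ_i > 0. There exists λ₀ ≥ 0 such that for every λ ≥ λ₀, the unique minimizer u*(λ) of F(·, y, τ, λ) is the constant vector whose every coordinate equals the weighted mean (Σ_{i=1}^n τ_i y_i)/(Σ_{i=1}^n τ_i). -/
/-- Telescoping bound: each deviation from the first coordinate is at most the
total variation. -/
lemma tele_abs (n : ℕ) (v : Fin (n + 1) → ℝ) (i : Fin (n + 1)) :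
    |v i - v 0| ≤ ∑ j : Fin n, |v j.succ - v j.castSucc| := by
  set g : ℕ → ℝ := fun j => v ⟨min j n, by omega⟩ with hg
  have hgv : ∀ i : Fin (n + 1), v i = g (i : ℕ) := by
    intro i
    simp only [hg]
    congr 1
    ext
    simp [Nat.min_eq_left (Nat.lt_succ_iff.mp i.isLt)]
  have hsum : ∑ j : Fin n, |v j.succ - v j.castSucc| =
      ∑ j ∈ Finset.range n, |g (j + 1) - g j| := by
    rw [← Fin.sum_univ_eq_sum_range (fun j => |g (j + 1) - g j|) n]
    refine Finset.sum_congr rfl fun j _ => ?_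
    rw [hgv j.succ, hgv j.castSucc]
    rfl
  rw [hgv i, hgv 0, hsum]
  have h0 : (0 : Fin (n+1)).val = 0 := rfl
  rw [h0]
  have htel : g (i : ℕ) - g 0 = ∑ j ∈ Finset.range (i : ℕ), (g (j + 1) - g j) :=
    (Finset.sum_range_sub g (i : ℕ)).symm
  rw [htel]
  calc |∑ j ∈ Finset.range (i : ℕ), (g (j + 1) - g j)|
      ≤ ∑ j ∈ Finset.range (i : ℕ), |g (j + 1) - g j| :=
        Finset.abs_sum_le_sum_abs _ _
    _ ≤ ∑ j ∈ Finset.range n, |g (j + 1) - g j| := by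
        apply Finset.sum_le_sum_of_subset_of_nonneg
        · exact Finset.range_subset_range.mpr (Nat.lt_succ_iff.mp i.isLt)
        · intro j _ _; exact abs_nonneg _

/-- For all sufficiently large `λ`, the unique minimizer of `F(·, y, τ, λ)` is the
constant vector whose every coordinate equals the weighted mean
`(Σ τ_i y_i)/(Σ τ_i)`. -/
theorem tv_minimizer_large_lambda (n : ℕ) (y τ : Fin (n + 1) → ℝ)
    (hτ : ∀ i, 0 < τ i) :
    ∃ lam₀ : ℝ, 0 ≤ lam₀ ∧ ∀ lam : ℝ, lam₀ ≤ lam →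
      ((∀ v : Fin (n + 1) → ℝ,
          tvF n y τ lam
            (fun _ => (∑ i : Fin (n + 1), τ i * y i) / (∑ i : Fin (n + 1), τ i))
            ≤ tvF n y τ lam v) ∧
        ∀ u : Fin (n + 1) → ℝ,
          (∀ v : Fin (n + 1) → ℝ, tvF n y τ lam u ≤ tvF n y τ lam v) →
            u = fun _ =>
              (∑ i : Fin (n + 1), τ i * y i) / (∑ i : Fin (n + 1), τ i)) := by
  set T : ℝ := ∑ i : Fin (n + 1), τ i with hT
  have hTpos : 0 < T := Finset.sum_pos (fun i _ => hτ i) Finset.univ_nonempty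
  set m : ℝ := (∑ i : Fin (n + 1), τ i * y i) / T with hm
  set C : ℝ := ∑ i : Fin (n + 1), τ i * |m - y i| with hC
  have hCnn : 0 ≤ C :=
    Finset.sum_nonneg fun i _ => mul_nonneg (hτ i).le (abs_nonneg _)
  -- the weighted residuals of the mean sum to zero
  have hmean : ∑ i : Fin (n + 1), τ i * (m - y i) = 0 := by
    have : ∑ i : Fin (n + 1), τ i * (m - y i)
        = T * m - ∑ i : Fin (n + 1), τ i * y i := by
      rw [hT, Finset.sum_mul]
      rw [← Finset.sum_sub_distrib]
      exact Finset.sum_congr rfl fun i _ => by ring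
    rw [this, hm, mul_div_cancel₀ _ (ne_of_gt hTpos)]
    ring
  refine ⟨2 * C, by linarith, fun lam hlam => ?_⟩
  -- key inequality
  have key : ∀ v : Fin (n + 1) → ℝ,
      tvF n y τ lam (fun _ => m) + ∑ i : Fin (n + 1), τ i * (v i - m) ^ 2
        ≤ tvF n y τ lam v := by
    intro v
    set TV : ℝ := ∑ j : Fin n, |v j.succ - v j.castSucc| with hTV
    have hTVnn : 0 ≤ TV := Finset.sum_nonneg fun j _ => abs_nonneg _
    have hconstTV : ∑ j : Fin n, |(fun _ : Fin (n+1) => m) j.succ -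
        (fun _ : Fin (n+1) => m) j.castSucc| = 0 := by
      simp
    -- quadratic decomposition
    have hquad : ∑ i : Fin (n + 1), τ i * (y i - v i) ^ 2
        = ∑ i : Fin (n + 1), τ i * (y i - m) ^ 2
          + ∑ i : Fin (n + 1), τ i * (v i - m) ^ 2
          + 2 * ∑ i : Fin (n + 1), τ i * (v i - m) * (m - y i) := by
      rw [Finset.mul_sum, ← Finset.sum_add_distrib, ← Finset.sum_add_distrib]
      exact Finset.sum_congr rfl fun i _ => by ring
    -- the cross term, rewritten using v 0
    have hcross : ∑ i : Fin (n + 1), τ i * (v i - m) * (m - y i)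
        = ∑ i : Fin (n + 1), τ i * (v i - v 0) * (m - y i) := by
      have h1 : ∑ i : Fin (n + 1), τ i * (v i - m) * (m - y i)
          - ∑ i : Fin (n + 1), τ i * (v i - v 0) * (m - y i)
          = (v 0 - m) * ∑ i : Fin (n + 1), τ i * (m - y i) := by
        rw [Finset.mul_sum, ← Finset.sum_sub_distrib]
        exact Finset.sum_congr rfl fun i _ => by ring
      have h2 := h1
      rw [hmean, mul_zero, sub_eq_zero] at h2
      exact h2
    have hbound : |∑ i : Fin (n + 1), τ i * (v i - v 0) * (m - y i)| ≤ TV * C := by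
      calc |∑ i : Fin (n + 1), τ i * (v i - v 0) * (m - y i)|
          ≤ ∑ i : Fin (n + 1), |τ i * (v i - v 0) * (m - y i)| :=
            Finset.abs_sum_le_sum_abs _ _
        _ ≤ ∑ i : Fin (n + 1), TV * (τ i * |m - y i|) := by
            refine Finset.sum_le_sum fun i _ => ?_
            rw [abs_mul, abs_mul, abs_of_pos (hτ i)]
            have h1 : |v i - v 0| ≤ TV := tele_abs n v i
            have h2 : 0 ≤ |m - y i| := abs_nonneg _
            calc τ i * |v i - v 0| * |m - y i|
                ≤ τ i * TV * |m - y i| :=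
                  mul_le_mul_of_nonneg_right
                    (mul_le_mul_of_nonneg_left h1 (hτ i).le) h2
              _ = TV * (τ i * |m - y i|) := by ring
        _ = TV * C := by rw [hC, Finset.mul_sum]
    -- combine
    have hcross_lb : -(TV * C) ≤ ∑ i : Fin (n + 1), τ i * (v i - m) * (m - y i) := by
      rw [hcross]
      exact neg_le_of_abs_le hbound
    have hlamTV : 2 * C * TV ≤ lam * TV := mul_le_mul_of_nonneg_right hlam hTVnn
    simp only [tvF]
    rw [hconstTV, mul_zero, add_zero, hquad, ← hTV]
    nlinarith
  constructor
  · intro v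
    have := key v
    have hnn : 0 ≤ ∑ i : Fin (n + 1), τ i * (v i - m) ^ 2 :=
      Finset.sum_nonneg fun i _ => mul_nonneg (hτ i).le (sq_nonneg _)
    linarith
  · intro u hu
    have h1 := key u
    have h2 := hu (fun _ => m)
    have hS : ∑ i : Fin (n + 1), τ i * (u i - m) ^ 2 = 0 := by
      have hnn : 0 ≤ ∑ i : Fin (n + 1), τ i * (u i - m) ^ 2 :=
        Finset.sum_nonneg fun i _ => mul_nonneg (hτ i).le (sq_nonneg _)
      linarith
    funext i
    have hterm : τ i * (u i - m) ^ 2 = 0 := by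
      have := (Finset.sum_eq_zero_iff_of_nonneg
        (fun j _ => mul_nonneg (hτ j).le (sq_nonneg (u j - m)))).mp hS i
        (Finset.mem_univ i)
      exact this
    have : (u i - m) ^ 2 = 0 := by
      rcases mul_eq_zero.mp hterm with h | h
      · exact absurd h (ne_of_gt (hτ i))
      · exact h
    have := pow_eq_zero_iff (n := 2) (by norm_num) |>.mp this
    linarith [sub_eq_zero.mp this]
end

section
/- Let n ≥ 1, y ∈ ℝⁿ, τ ∈ ℝⁿ with τ_i > 0, and λ ≥ 0, and let u*(λ) be the unique minimizer of F(·, y, τ, λ). Then the weighted mean is preserved: Σ_{i=1}^n τ_i u*_i(λ) = Σ_{i=1}^n τ_i y_i. -/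
/-- The minimizer of `F(·, y, τ, λ)` preserves the weighted mean:
`Σ τ_i u*_i(λ) = Σ τ_i y_i`. -/
theorem tv_minimizer_mean_preserved (n : ℕ) (y τ : Fin (n + 1) → ℝ)
    (hτ : ∀ i, 0 < τ i) (lam : ℝ) (hlam : 0 ≤ lam) (u : Fin (n + 1) → ℝ)
    (hmin : ∀ v : Fin (n + 1) → ℝ, tvF n y τ lam u ≤ tvF n y τ lam v) :
    ∑ i : Fin (n + 1), τ i * u i = ∑ i : Fin (n + 1), τ i * y i := by
  set S : ℝ := ∑ i : Fin (n + 1), τ i * (y i - u i) with hS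
  set T : ℝ := ∑ i : Fin (n + 1), τ i with hT
  have hTpos : 0 < T := Finset.sum_pos (fun i _ => hτ i) ⟨0, Finset.mem_univ 0⟩
  -- key inequality: for all t, t^2 * T - 2 * t * S ≥ 0
  have key : ∀ t : ℝ, 0 ≤ t ^ 2 * T - 2 * t * S := by
    intro t
    have h := hmin (fun i => u i + t)
    unfold tvF at h
    simp only [add_sub_add_right_eq_sub] at h
    have h2 : (∑ i : Fin (n + 1), τ i * (y i - u i) ^ 2) ≤
        ∑ i : Fin (n + 1), τ i * (y i - (u i + t)) ^ 2 := le_of_add_le_add_right h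
    have expand : (∑ i : Fin (n + 1), τ i * (y i - (u i + t)) ^ 2)
        = (∑ i : Fin (n + 1), τ i * (y i - u i) ^ 2) + (t ^ 2 * T - 2 * t * S) := by
      simp only [hS, hT, Finset.mul_sum, ← Finset.sum_sub_distrib,
        ← Finset.sum_add_distrib]
      exact Finset.sum_congr rfl fun i _ => by ring
    rw [expand] at h2
    linarith
  have hS0 : S = 0 := by
    have h1 := key (S / T)
    have h2 : (S / T) ^ 2 * T - 2 * (S / T) * S = -(S ^ 2 / T) := by
      field_simp
      ring
    rw [h2] at h1
    have h3 : S ^ 2 = S ^ 2 / T * T := (div_mul_cancel₀ _ hTpos.ne').symm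
    nlinarith [sq_nonneg S]
  have : (∑ i : Fin (n + 1), τ i * y i) - ∑ i : Fin (n + 1), τ i * u i = S := by
    rw [hS, ← Finset.sum_sub_distrib]
    apply Finset.sum_congr rfl
    intro i _
    ring
  linarith
end

section
/- Let n ≥ 1, y ∈ ℝⁿ, τ ∈ ℝⁿ with τ_i > 0, and let u*(λ) be the unique minimizer of F(·, y, τ, λ). The number of segments K(λ) of u*(λ) is a nonincreasing function of λ on [0, ∞). -/
open Classical in
/-- The number of segments (maximal constant runs) of `u`: one more than the
number of jumps between adjacent indices. -/
noncomputable def numSegments (n : ℕ) (u : Fin (n + 1) → ℝ) : ℕ :=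
  (Finset.univ.filter (fun i : Fin n => u i.succ ≠ u i.castSucc)).card + 1

open Finset Filter Topology

lemma nonneg_of_eventually_nonneg_mul_add_mul {a b : ℝ}
    (h : ∀ᶠ t in 𝓝[>] 0, 0 ≤ t * (a + t * b)) : 0 ≤ a := by
  have hlim : Tendsto (fun t => a + t * b) (𝓝[>] 0) (𝓝 a) := by
    have : Tendsto (fun t => a + t * b) (𝓝 0) (𝓝 (a + 0 * b)) :=
      tendsto_const_nhds.add (tendsto_id.mul_const b)
    simpa using this.mono_left nhdsWithin_le_nhds
  refine ge_of_tendsto hlim ?_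
  filter_upwards [h, self_mem_nhdsWithin] with t ht ht0
  exact nonneg_of_mul_nonneg_right ht ht0

/-- First-order conditions at `t = 0` for `t ↦ t Z + t² T + c |D - t|`. -/
lemma abs_le_and_eq_of_forall_perturb {Z T c D : ℝ} (hc : 0 ≤ c)
    (h : ∀ t, 0 ≤ t * Z + t ^ 2 * T + c * (|D - t| - |D|)) :
    |Z| ≤ c ∧ (0 < D → Z = c) ∧ (D < 0 → Z = -c) := by
  have right (t : ℝ) (ht : 0 < t) : 0 ≤ t * (Z + c + t * T) := by
    have := mul_le_mul_of_nonneg_left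
      ((abs_sub_abs_le_abs_sub _ _).trans_eq (by simp [abs_of_pos ht]) : |D - t| - |D| ≤ t) hc
    nlinarith [h t]
  have left (t : ℝ) (ht : 0 < t) : 0 ≤ t * (c - Z + t * T) := by
    have := mul_le_mul_of_nonneg_left
      ((abs_sub_abs_le_abs_sub _ _).trans_eq (by simp [abs_of_pos ht]) : |D + t| - |D| ≤ t) hc
    have h' := h (-t)
    rw [sub_neg_eq_add] at h'
    nlinarith
  have hright := nonneg_of_eventually_nonneg_mul_add_mul (eventually_nhdsWithin_of_forall right)
  have hleft := nonneg_of_eventually_nonneg_mul_add_mul (eventually_nhdsWithin_of_forall left)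
  refine ⟨abs_le.2 ⟨by linarith, by linarith⟩, fun hD => le_antisymm (by linarith) ?_,
    fun hD => le_antisymm ?_ (by linarith)⟩
  · refine sub_nonneg.1 (nonneg_of_eventually_nonneg_mul_add_mul (b := T) ?_)
    filter_upwards [Ioo_mem_nhdsGT hD] with t ⟨ht0, htD⟩
    have := h t
    rw [abs_of_pos hD, abs_of_pos (sub_pos.2 htD)] at this
    nlinarith
  · refine sub_nonneg.1 (nonneg_of_eventually_nonneg_mul_add_mul (b := T) ?_)
    filter_upwards [Ioo_mem_nhdsGT (neg_pos.2 hD)] with t ⟨ht0, htD⟩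
    have := h (-t)
    rw [abs_of_neg hD, abs_of_neg (by linarith : D - -t < 0)] at this
    nlinarith

section Existence

variable {n : ℕ} {y τ : Fin (n + 1) → ℝ} {c : ℝ}

lemma continuous_tvF : Continuous (tvF n y τ c) := by
  unfold tvF
  fun_prop

lemma mul_sq_le_tvF (hτ : ∀ i, 0 ≤ τ i) (hc : 0 ≤ c) (v : Fin (n + 1) → ℝ) (i : Fin (n + 1)) :
    τ i * (y i - v i) ^ 2 ≤ tvF n y τ c v := by
  have hsq : τ i * (y i - v i) ^ 2 ≤ ∑ j, τ j * (y j - v j) ^ 2 :=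
    single_le_sum (f := fun j => τ j * (y j - v j) ^ 2)
      (fun j _ => mul_nonneg (hτ j) (sq_nonneg _)) (mem_univ i)
  have htv : 0 ≤ c * ∑ j : Fin n, |v j.succ - v j.castSucc| := by positivity
  unfold tvF
  linarith

lemma tendsto_tvF_cocompact (hτ : ∀ i, 0 < τ i) (hc : 0 ≤ c) :
    Tendsto (tvF n y τ c) (cocompact _) atTop := by
  rw [← coprodᵢ_cocompact, Filter.coprodᵢ, tendsto_iSup]
  intro i
  have hi : Tendsto (fun x : ℝ => τ i * dist x (y i) ^ 2) (cocompact ℝ) atTop :=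
    ((tendsto_pow_atTop two_ne_zero).comp (tendsto_dist_right_cocompact_atTop _)).const_mul_atTop
      (hτ i)
  refine tendsto_atTop_mono (fun v => ?_) (hi.comp tendsto_comap)
  calc τ i * dist (v i) (y i) ^ 2 = τ i * (y i - v i) ^ 2 := by
        rw [Real.dist_eq, sq_abs, ← neg_sub, neg_sq]
    _ ≤ tvF n y τ c v := mul_sq_le_tvF (fun j => (hτ j).le) hc v i

lemma exists_forall_tvF_le (hτ : ∀ i, 0 < τ i) (hc : 0 ≤ c) :
    ∃ u, ∀ v, tvF n y τ c u ≤ tvF n y τ c v :=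
  continuous_tvF.exists_forall_le (tendsto_tvF_cocompact hτ hc)

end Existence

noncomputable def tvSeq (n : ℕ) (y τ : ℕ → ℝ) (c : ℝ) (u : ℕ → ℝ) : ℝ :=
  tvF n (fun i => y i) (fun i => τ i) c (fun i => u i)

lemma tvSeq_eq {n : ℕ} {y τ : ℕ → ℝ} {c : ℝ} {u : ℕ → ℝ} :
    tvSeq n y τ c u =
      ∑ i ∈ range (n + 1), τ i * (y i - u i) ^ 2 + c * ∑ k ∈ range n, |u (k + 1) - u k| := by
  simp only [tvSeq, tvF, Fin.val_succ, Fin.val_castSucc]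
  rw [Fin.sum_univ_eq_sum_range (fun i => τ i * (y i - u i) ^ 2),
    Fin.sum_univ_eq_sum_range (fun k => |u (k + 1) - u k|)]

def toSeq {n : ℕ} (f : Fin (n + 1) → ℝ) (j : ℕ) : ℝ := f (Fin.ofNat (n + 1) j)

section FinToSeq

variable {n : ℕ} (f : Fin (n + 1) → ℝ)

@[simp]
lemma toSeq_val (i : Fin (n + 1)) : toSeq f i = f i := by
  simp [toSeq]

lemma toSeq_succ (i : Fin n) : toSeq f (i + 1) = f i.succ := by
  rw [← Fin.val_succ, toSeq_val]

lemma toSeq_castSucc (i : Fin n) : toSeq f i = f i.castSucc := by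
  rw [← Fin.val_castSucc, toSeq_val]

end FinToSeq

lemma tvF_eq_tvSeq {n : ℕ} {c : ℝ} (y τ u : Fin (n + 1) → ℝ) :
    tvF n y τ c u = tvSeq n (toSeq y) (toSeq τ) c (toSeq u) := by
  simp [tvSeq]

lemma tvSeq_le_of_forall_tvF_le {n : ℕ} {c : ℝ} {y τ u : Fin (n + 1) → ℝ}
    (hu : ∀ v, tvF n y τ c u ≤ tvF n y τ c v) (v : ℕ → ℝ) :
    tvSeq n (toSeq y) (toSeq τ) c (toSeq u) ≤ tvSeq n (toSeq y) (toSeq τ) c v := by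
  simpa [tvSeq] using hu fun i => v i

def tvDual (y τ u : ℕ → ℝ) (k : ℕ) : ℝ := ∑ j ∈ range k, 2 * τ j * (u j - y j)

lemma tvDual_succ (y τ u : ℕ → ℝ) (k : ℕ) :
    tvDual y τ u (k + 1) = tvDual y τ u k + 2 * τ k * (u k - y k) :=
  sum_range_succ _ k

lemma tvDual_eq_add (x y z τ : ℕ → ℝ) (k : ℕ) :
    tvDual x τ z k = tvDual x τ y k + tvDual y τ z k := by
  rw [tvDual, tvDual, tvDual, ← sum_add_distrib]
  exact sum_congr rfl fun j _ => by ring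

section ShiftPrefix

variable {n k : ℕ} {y τ u : ℕ → ℝ} {c : ℝ}

lemma sum_sq_shift_prefix (hk : k ≤ n) (t : ℝ) :
    ∑ i ∈ range (n + 1), τ i * (y i - if i ≤ k then u i + t else u i) ^ 2 =
      ∑ i ∈ range (n + 1), τ i * (y i - u i) ^ 2 +
        t * tvDual y τ u (k + 1) + t ^ 2 * ∑ j ∈ range (k + 1), τ j := by
  have hprefix : (range (n + 1)).filter (· ≤ k) = range (k + 1) := by
    ext i
    simp only [mem_filter, mem_range]
    omega
  have hterm : ∀ i ∈ range (n + 1), τ i * (y i - if i ≤ k then u i + t else u i) ^ 2 =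
      τ i * (y i - u i) ^ 2 + if i ≤ k then t * (2 * τ i * (u i - y i)) + t ^ 2 * τ i else 0 := by
    intro i _
    split_ifs <;> ring
  rw [sum_congr rfl hterm, sum_add_distrib, ← sum_filter, hprefix, sum_add_distrib, tvDual,
    mul_sum, mul_sum, add_assoc]

lemma sum_abs_shift_prefix (t : ℝ) :
    ∑ m ∈ range n, |(if m + 1 ≤ k then u (m + 1) + t else u (m + 1)) -
        (if m ≤ k then u m + t else u m)| =
      ∑ m ∈ range n, |u (m + 1) - u m| +
        if k < n then |u (k + 1) - u k - t| - |u (k + 1) - u k| else 0 := by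
  have hterm : ∀ m ∈ range n, |(if m + 1 ≤ k then u (m + 1) + t else u (m + 1)) -
      (if m ≤ k then u m + t else u m)| = |u (m + 1) - u m| +
        if m = k then |u (k + 1) - u k - t| - |u (k + 1) - u k| else 0 := by
    intro m _
    rcases lt_trichotomy m k with hmk | rfl | hkm
    · rw [if_pos (by omega), if_pos hmk.le, if_neg hmk.ne, add_sub_add_right_eq_sub, add_zero]
    · rw [if_neg (by omega), if_pos le_rfl, if_pos rfl, sub_add_eq_sub_sub]
      ring
    · rw [if_neg (by omega), if_neg (by omega), if_neg hkm.ne', add_zero]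
  rw [sum_congr rfl hterm, sum_add_distrib, sum_ite_eq']
  simp only [mem_range]

lemma tvSeq_shift_prefix (hk : k ≤ n) (t : ℝ) :
    tvSeq n y τ c (fun i => if i ≤ k then u i + t else u i) = tvSeq n y τ c u +
      (t * tvDual y τ u (k + 1) + t ^ 2 * ∑ j ∈ range (k + 1), τ j +
        (if k < n then c else 0) * (|u (k + 1) - u k - t| - |u (k + 1) - u k|)) := by
  simp only [tvSeq_eq]
  rw [sum_sq_shift_prefix hk, sum_abs_shift_prefix]
  split_ifs <;> ring

end ShiftPrefix

structure IsKKTPoint (n : ℕ) (y τ : ℕ → ℝ) (c : ℝ) (u : ℕ → ℝ) : Prop where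
  dual_total : tvDual y τ u (n + 1) = 0
  abs_dual_le : ∀ k < n, |tvDual y τ u (k + 1)| ≤ c
  dual_eq_of_lt : ∀ k < n, u k < u (k + 1) → tvDual y τ u (k + 1) = c
  dual_eq_of_gt : ∀ k < n, u (k + 1) < u k → tvDual y τ u (k + 1) = -c

/-- Compare `u` with the shifts of its prefixes `u 0, …, u k` by constants. -/
theorem isKKTPoint_of_forall_le {n : ℕ} {y τ u : ℕ → ℝ} {c : ℝ} (hc : 0 ≤ c)
    (hu : ∀ v, tvSeq n y τ c u ≤ tvSeq n y τ c v) : IsKKTPoint n y τ c u := by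
  have hperturb : ∀ k ≤ n, ∀ t, 0 ≤ t * tvDual y τ u (k + 1) + t ^ 2 * ∑ j ∈ range (k + 1), τ j +
      (if k < n then c else 0) * (|u (k + 1) - u k - t| - |u (k + 1) - u k|) := by
    intro k hk t
    have := hu fun i => if i ≤ k then u i + t else u i
    rw [tvSeq_shift_prefix hk] at this
    linarith
  have hjump (k : ℕ) (hk : k < n) := abs_le_and_eq_of_forall_perturb hc fun t => by
    simpa only [if_pos hk] using hperturb k hk.le t
  have htotal := abs_le_and_eq_of_forall_perturb le_rfl fun t => by
    simpa only [if_neg (lt_irrefl n)] using hperturb n le_rfl t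
  exact ⟨abs_nonpos_iff.1 htotal.1, fun k hk => (hjump k hk).1,
    fun k hk hlt => (hjump k hk).2.1 (sub_pos.2 hlt),
    fun k hk hgt => (hjump k hk).2.2 (sub_neg.2 hgt)⟩

namespace IsKKTPoint

variable {n : ℕ} {y τ u w : ℕ → ℝ} {c μ : ℝ}

lemma dual_mul_eq (h : IsKKTPoint n y τ c u) {k : ℕ} (hk : k < n) :
    tvDual y τ u (k + 1) * (u (k + 1) - u k) = c * |u (k + 1) - u k| := by
  rcases lt_trichotomy (u k) (u (k + 1)) with hlt | heq | hgt
  · rw [h.dual_eq_of_lt k hk hlt, abs_of_pos (sub_pos.2 hlt)]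
  · simp [heq]
  · rw [h.dual_eq_of_gt k hk hgt, abs_of_neg (sub_neg.2 hgt)]
    ring

/-- Summation by parts turns the first variation of the data term into a pairing of the
dual partial sums with the increments, which the total variation dominates. -/
lemma tvSeq_add_le (h : IsKKTPoint n y τ c u) (v : ℕ → ℝ) :
    tvSeq n y τ c u + ∑ i ∈ range (n + 1), τ i * (v i - u i) ^ 2 ≤ tvSeq n y τ c v := by
  set x : ℕ → ℝ := fun i => v i - u i
  set g : ℕ → ℝ := fun i => 2 * τ i * (u i - y i)
  have hquad : ∑ i ∈ range (n + 1), τ i * (y i - v i) ^ 2 =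
      ∑ i ∈ range (n + 1), τ i * (y i - u i) ^ 2 + ∑ i ∈ range (n + 1), x i * g i +
        ∑ i ∈ range (n + 1), τ i * x i ^ 2 := by
    rw [← sum_add_distrib, ← sum_add_distrib]
    exact sum_congr rfl fun i _ => by simp only [x, g]; ring
  have habel : ∑ i ∈ range (n + 1), x i * g i =
      -∑ k ∈ range n, (x (k + 1) - x k) * tvDual y τ u (k + 1) := by
    have := sum_range_by_parts x g (n + 1)
    simp only [smul_eq_mul, add_tsub_cancel_right] at this
    rw [this]
    change x n * tvDual y τ u (n + 1) - ∑ k ∈ range n, (x (k + 1) - x k) * tvDual y τ u (k + 1) = _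
    rw [h.dual_total]
    ring
  have hterm : ∀ k ∈ range n, c * |u (k + 1) - u k| - c * |v (k + 1) - v k| ≤
      -((x (k + 1) - x k) * tvDual y τ u (k + 1)) := by
    intro k hk
    have hu := h.dual_mul_eq (mem_range.1 hk)
    have hv : tvDual y τ u (k + 1) * (v (k + 1) - v k) ≤ c * |v (k + 1) - v k| := by
      calc _ ≤ |tvDual y τ u (k + 1)| * |v (k + 1) - v k| := by rw [← abs_mul]; exact le_abs_self _
        _ ≤ c * |v (k + 1) - v k| := by gcongr; exact h.abs_dual_le k (mem_range.1 hk)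
    simp only [x]
    linarith
  have hsum := sum_le_sum hterm
  rw [sum_sub_distrib, ← mul_sum, ← mul_sum, sum_neg_distrib, ← habel] at hsum
  rw [tvSeq_eq, tvSeq_eq, hquad]
  linarith

lemma eq_of_tvSeq_le (h : IsKKTPoint n y τ c u) (hτ : ∀ i, 0 < τ i) {v : ℕ → ℝ}
    (hv : tvSeq n y τ c v ≤ tvSeq n y τ c u) {j : ℕ} (hj : j ≤ n) : v j = u j := by
  have hterm_nonneg : ∀ i ∈ range (n + 1), 0 ≤ τ i * (v i - u i) ^ 2 :=
    fun i _ => mul_nonneg (hτ i).le (sq_nonneg _)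
  have hzero : ∑ i ∈ range (n + 1), τ i * (v i - u i) ^ 2 = 0 :=
    le_antisymm (by linarith [h.tvSeq_add_le v]) (sum_nonneg hterm_nonneg)
  have hj0 := (sum_eq_zero_iff_of_nonneg hterm_nonneg).1 hzero j (mem_range.2 (by omega))
  rwa [mul_eq_zero, or_iff_right (hτ j).ne', sq_eq_zero_iff, sub_eq_zero] at hj0

lemma abs_dual_le_of_le (h : IsKKTPoint n y τ c u) (hc : 0 ≤ c) {k : ℕ} (hk : k ≤ n + 1) :
    |tvDual y τ u k| ≤ c := by
  rcases k with _ | k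
  · simpa [tvDual] using hc
  · rcases (Nat.succ_le_succ_iff.1 hk).lt_or_eq with hkn | rfl
    · exact h.abs_dual_le k hkn
    · simpa [h.dual_total] using hc

/-- The dual path reaches `μ` at `k + 1` but stays within `[-μ, μ]` at `k` and `k + 2`, which
fixes the signs of the increments `2 τ (w - u)` at `k` and `k + 1`. -/
lemma le_and_le_of_lt (hw : IsKKTPoint n u τ μ w) (hμ : 0 ≤ μ) (hτ : ∀ i, 0 < τ i) {k : ℕ}
    (hk : k < n) (hlt : w k < w (k + 1)) : u k ≤ w k ∧ w (k + 1) ≤ u (k + 1) := by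
  have hpeak := hw.dual_eq_of_lt k hk hlt
  have hbefore := abs_le.1 (hw.abs_dual_le_of_le hμ (k := k) (by omega))
  have hafter := abs_le.1 (hw.abs_dual_le_of_le hμ (k := k + 2) (by omega))
  rw [tvDual_succ, hpeak] at hafter
  rw [tvDual_succ] at hpeak
  have hτk := hτ k
  have hτk' := hτ (k + 1)
  constructor <;> nlinarith

lemma le_and_le_of_gt (hw : IsKKTPoint n u τ μ w) (hμ : 0 ≤ μ) (hτ : ∀ i, 0 < τ i) {k : ℕ}
    (hk : k < n) (hgt : w (k + 1) < w k) : w k ≤ u k ∧ u (k + 1) ≤ w (k + 1) := by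
  have hpeak := hw.dual_eq_of_gt k hk hgt
  have hbefore := abs_le.1 (hw.abs_dual_le_of_le hμ (k := k) (by omega))
  have hafter := abs_le.1 (hw.abs_dual_le_of_le hμ (k := k + 2) (by omega))
  rw [tvDual_succ, hpeak] at hafter
  rw [tvDual_succ] at hpeak
  have hτk := hτ k
  have hτk' := hτ (k + 1)
  constructor <;> nlinarith

lemma lt_of_lt (hw : IsKKTPoint n u τ μ w) (hμ : 0 ≤ μ) (hτ : ∀ i, 0 < τ i) {k : ℕ}
    (hk : k < n) (hlt : w k < w (k + 1)) : u k < u (k + 1) := by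
  obtain ⟨h₁, h₂⟩ := hw.le_and_le_of_lt hμ hτ hk hlt
  linarith

lemma gt_of_gt (hw : IsKKTPoint n u τ μ w) (hμ : 0 ≤ μ) (hτ : ∀ i, 0 < τ i) {k : ℕ}
    (hk : k < n) (hgt : w (k + 1) < w k) : u (k + 1) < u k := by
  obtain ⟨h₁, h₂⟩ := hw.le_and_le_of_gt hμ hτ hk hgt
  linarith

lemma ne_of_ne (hw : IsKKTPoint n u τ μ w) (hμ : 0 ≤ μ) (hτ : ∀ i, 0 < τ i) {k : ℕ}
    (hk : k < n) (hne : w (k + 1) ≠ w k) : u (k + 1) ≠ u k := by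
  rcases hne.lt_or_gt with hgt | hlt
  · exact (hw.gt_of_gt hμ hτ hk hgt).ne
  · exact (hw.lt_of_lt hμ hτ hk hlt).ne'

lemma trans (hu : IsKKTPoint n y τ c u) (hw : IsKKTPoint n u τ μ w) (hμ : 0 ≤ μ)
    (hτ : ∀ i, 0 < τ i) : IsKKTPoint n y τ (c + μ) w where
  dual_total := by rw [tvDual_eq_add y u w, hu.dual_total, hw.dual_total, add_zero]
  abs_dual_le k hk := by
    rw [tvDual_eq_add y u w]
    exact (abs_add_le _ _).trans (add_le_add (hu.abs_dual_le k hk) (hw.abs_dual_le k hk))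
  dual_eq_of_lt k hk hlt := by
    rw [tvDual_eq_add y u w, hu.dual_eq_of_lt k hk (hw.lt_of_lt hμ hτ hk hlt),
      hw.dual_eq_of_lt k hk hlt]
  dual_eq_of_gt k hk hgt := by
    rw [tvDual_eq_add y u w, hu.dual_eq_of_gt k hk (hw.gt_of_gt hμ hτ hk hgt),
      hw.dual_eq_of_gt k hk hgt, neg_add]

end IsKKTPoint

lemma numSegments_le_numSegments {n : ℕ} {u v : Fin (n + 1) → ℝ}
    (h : ∀ i : Fin n, u i.succ ≠ u i.castSucc → v i.succ ≠ v i.castSucc) :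
    numSegments n u ≤ numSegments n v := by
  unfold numSegments
  gcongr 1
  exact card_le_card (monotone_filter_right _ fun i _ => h i)

/-- The number of segments `K(λ)` of the minimizer is a nonincreasing function of
`λ` on `[0, ∞)`. -/
theorem tv_numSegments_antitone (n : ℕ) (y τ : Fin (n + 1) → ℝ)
    (hτ : ∀ i, 0 < τ i)
    (lam lam' : ℝ) (hlam : 0 ≤ lam) (hle : lam ≤ lam')
    (u u' : Fin (n + 1) → ℝ)
    (hu : ∀ v : Fin (n + 1) → ℝ, tvF n y τ lam u ≤ tvF n y τ lam v)
    (hu' : ∀ v : Fin (n + 1) → ℝ, tvF n y τ lam' u' ≤ tvF n y τ lam' v) :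
    numSegments n u' ≤ numSegments n u := by
  have hμ : 0 ≤ lam' - lam := sub_nonneg.2 hle
  have hτ' : ∀ j, 0 < toSeq τ j := fun j => hτ _
  obtain ⟨v, hv⟩ := exists_forall_tvF_le (y := u) hτ hμ
  have hKu := isKKTPoint_of_forall_le hlam (tvSeq_le_of_forall_tvF_le hu)
  have hKv := isKKTPoint_of_forall_le hμ (tvSeq_le_of_forall_tvF_le hv)
  have hK := hKu.trans hKv hμ hτ'
  rw [add_sub_cancel] at hK
  have hu'_le_v : tvSeq n (toSeq y) (toSeq τ) lam' (toSeq u') ≤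
      tvSeq n (toSeq y) (toSeq τ) lam' (toSeq v) := by
    rw [← tvF_eq_tvSeq, ← tvF_eq_tvSeq]
    exact hu' v
  obtain rfl : u' = v := funext fun i => by
    simpa using hK.eq_of_tvSeq_le hτ' hu'_le_v i.is_le
  refine numSegments_le_numSegments fun i hjump => ?_
  have := hKv.ne_of_ne hμ hτ' i.isLt (by rwa [toSeq_succ, toSeq_castSucc])
  rwa [toSeq_succ, toSeq_castSucc] at this
end

section
/- Let n ≥ 1, y ∈ ℝⁿ, τ ∈ ℝⁿ with τ_i > 0, and let u*(λ) be the unique minimizer of F(·, y, τ, λ). For every index i ∈ {1,…,n−1} there exists a value λ°_i ≥ 0 such that for all λ ≥ 0: u*_i(λ) = u*_{i+1}(λ) if and only if λ ≥ λ°_i. (In particular the set of λ at which the points i and i+1 are merged is a closed half-line.) -/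
/-!
Let `G_k = ∑_{j<k} 2 τ_j (u_j - y_j)` be the derivative of the fidelity when the first `k`
samples are raised together. Optimality of `u` against these prefix shifts gives
`G_0 = G_{n+1} = 0`, `|G_{i+1}| ≤ λ`, and `G_{i+1} = λ` (resp. `-λ`) when `u` jumps up (resp.
down) across the edge `(i, i+1)`. For minimizers `u` at `λ` and `v` at `μ ≥ λ`, the difference
`G^v - G^u` obeys a discrete maximum principle, `G^v - G^u ≤ μ - λ`: at the first maximum above
`μ - λ` the jump signs forced by the optimality conditions contradict the signs of `v - u` read
off from the increments `2 τ_j (v_j - u_j)`. The same argument then shows that a pair merged at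
`λ` stays merged at every `μ ≥ λ` (jumps down are handled by the symmetry `y ↦ -y`), so the
merge set is an upper ray. It is nonempty since for large `λ` the constant weighted mean is a
minimizer, and it contains its infimum since strong convexity gives
`∑ τ_j (u_j - v_j)² ≤ 2 (μ - λ) TV(u)`: minimizers merged at `μ ↓ λ` leave `u` no room
to jump.
-/

open Finset Filter Topology

theorem Fin.partialSum_eq_sum_val_lt {M : Type*} [AddCommMonoid M] {m : ℕ} (f : Fin m → M)
    (k : Fin (m + 1)) : Fin.partialSum f k = ∑ j with j.val < k.val, f j :=
  List.sum_take_ofFn f k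

theorem Fin.exists_left_strict_local_max {α : Type*} [LinearOrder α] {N : ℕ}
    (w : Fin (N + 2) → α) {c : α} (h0 : w 0 ≤ c) (hlast : w (Fin.last (N + 1)) ≤ c)
    {k : Fin (N + 2)} (hk : c < w k) :
    ∃ i : Fin N, c < w i.castSucc.succ ∧ w i.castSucc.castSucc < w i.castSucc.succ ∧
      w i.succ.succ ≤ w i.castSucc.succ := by
  obtain ⟨m, hm⟩ := Finite.exists_max w
  obtain ⟨j, hj_max, hj_first⟩ := (univ.filter fun j => ∀ l, w l ≤ w j).exists_min_image id
    ⟨m, by simpa using hm⟩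
  simp only [mem_filter, mem_univ, true_and, id] at hj_max hj_first
  have hcj : c < w j := hk.trans_le (hj_max k)
  obtain ⟨j, rfl⟩ := Fin.exists_succ_eq.2 (show j ≠ 0 by rintro rfl; exact hcj.not_ge h0)
  obtain ⟨i, rfl⟩ := Fin.exists_castSucc_eq.2
    (show j ≠ Fin.last N by rintro rfl; exact hcj.not_ge hlast)
  refine ⟨i, hcj, (hj_max _).lt_of_ne fun h => ?_, hj_max _⟩
  exact Fin.castSucc_lt_succ.not_ge (hj_first _ fun l => h ▸ hj_max l)

theorem nonneg_of_forall_quadratic_nonneg {A c δ : ℝ} (hδ : 0 < δ)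
    (h : ∀ t, 0 < t → t < δ → 0 ≤ A * t ^ 2 + c * t) : 0 ≤ c := by
  have hlim : Tendsto (fun t => A * t + c) (𝓝[>] 0) (𝓝 c) :=
    ((by fun_prop : Continuous fun t : ℝ => A * t + c).tendsto' 0 c (by simp)).mono_left
      nhdsWithin_le_nhds
  refine ge_of_tendsto hlim ?_
  filter_upwards [Ioo_mem_nhdsGT hδ] with t ⟨ht, htδ⟩
  refine (mul_nonneg_iff_of_pos_left ht).1 ?_
  linarith [h t ht htδ]

namespace TVDenoising

variable {n : ℕ}

def fidelity (y τ u : Fin (n + 1) → ℝ) : ℝ := ∑ i, τ i * (y i - u i) ^ 2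

def totalVariation (u : Fin (n + 1) → ℝ) : ℝ := ∑ i : Fin n, |u i.succ - u i.castSucc|

def IsTVMinimizer (y τ : Fin (n + 1) → ℝ) (lam : ℝ) (u : Fin (n + 1) → ℝ) : Prop :=
  ∀ v, tvF n y τ lam u ≤ tvF n y τ lam v

/-- `prefixGrad y τ u k` sums the fidelity gradient over the first `k` samples; the edge between
samples `i` and `i + 1` corresponds to `k = i.castSucc.succ`. -/
def prefixGrad (y τ u : Fin (n + 1) → ℝ) : Fin (n + 2) → ℝ :=
  Fin.partialSum fun j => 2 * τ j * (u j - y j)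

theorem tvF_eq_fidelity_add (y τ : Fin (n + 1) → ℝ) (lam : ℝ) (u : Fin (n + 1) → ℝ) :
    tvF n y τ lam u = fidelity y τ u + lam * totalVariation u := rfl

theorem tvF_neg_neg (y τ : Fin (n + 1) → ℝ) (lam : ℝ) (u : Fin (n + 1) → ℝ) :
    tvF n (-y) τ lam (-u) = tvF n y τ lam u := by
  simp only [tvF, Pi.neg_apply, neg_sub_neg]
  congr 1
  · exact sum_congr rfl fun j _ => by ring
  · simp only [abs_sub_comm]

theorem totalVariation_nonneg (u : Fin (n + 1) → ℝ) : 0 ≤ totalVariation u :=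
  sum_nonneg fun _ _ => abs_nonneg _

theorem abs_sub_le_totalVariation (u : Fin (n + 1) → ℝ) (j : Fin (n + 1)) :
    |u j - u 0| ≤ totalVariation u := by
  have h := congrFun (Fin.partialSum_left_neg u) j
  rw [Pi.vadd_apply, vadd_eq_add, ← eq_sub_iff_add_eq', Fin.partialSum_eq_sum_val_lt] at h
  rw [← h]
  refine (abs_sum_le_sum_abs _ _).trans ?_
  refine (sum_le_sum_of_subset_of_nonneg (filter_subset _ _) fun _ _ _ => abs_nonneg _).trans ?_
  simp only [totalVariation, neg_add_eq_sub, le_refl]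

theorem totalVariation_add_const (u : Fin (n + 1) → ℝ) (t : ℝ) :
    totalVariation (u + fun _ => t) = totalVariation u := by
  simp only [totalVariation, Pi.add_apply, add_sub_add_right_eq_sub]

theorem totalVariation_add_indicator (u : Fin (n + 1) → ℝ) (i : Fin n) (t : ℝ) :
    totalVariation (u + fun j => if j ≤ i.castSucc then t else 0) =
      totalVariation u + (|u i.succ - u i.castSucc - t| - |u i.succ - u i.castSucc|) := by
  rw [← sub_eq_iff_eq_add', totalVariation, totalVariation, ← sum_sub_distrib,
    sum_eq_single i]
  · simp only [Pi.add_apply, Fin.castSucc_lt_succ.not_ge, if_false, le_refl, if_true, add_zero]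
    rw [sub_sub]
  · intro e _ hei
    simp only [Pi.add_apply, Fin.succ_le_castSucc_iff, Fin.castSucc_le_castSucc_iff]
    rcases hei.lt_or_gt with h | h
    · simp [h, h.le]
    · simp [h.not_gt, h.not_ge]
  · simp

theorem totalVariation_midpoint_le (u v : Fin (n + 1) → ℝ) :
    totalVariation (fun j => (u j + v j) / 2) ≤ (totalVariation u + totalVariation v) / 2 := by
  simp only [totalVariation, sum_div, ← sum_add_distrib]
  refine sum_le_sum fun e _ => ?_
  rw [show (u e.succ + v e.succ) / 2 - (u e.castSucc + v e.castSucc) / 2 =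
    ((u e.succ - u e.castSucc) + (v e.succ - v e.castSucc)) / 2 by ring, abs_div, abs_two]
  linarith [abs_add_le (u e.succ - u e.castSucc) (v e.succ - v e.castSucc)]

theorem fidelity_add (y τ u h : Fin (n + 1) → ℝ) :
    fidelity y τ (u + h) =
      fidelity y τ u + ∑ j, 2 * τ j * (u j - y j) * h j + ∑ j, τ j * h j ^ 2 := by
  simp only [fidelity, Pi.add_apply, ← sum_add_distrib]
  exact sum_congr rfl fun j _ => by ring

theorem fidelity_add_indicator (y τ u : Fin (n + 1) → ℝ) (k : Fin (n + 1)) (t : ℝ) :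
    fidelity y τ (u + fun j => if j ≤ k then t else 0) =
      fidelity y τ u + prefixGrad y τ u k.succ * t +
        (∑ j : Fin (n + 1) with j ≤ k, τ j) * t ^ 2 := by
  rw [fidelity_add, add_assoc, add_assoc, prefixGrad, Fin.partialSum_eq_sum_val_lt, sum_filter,
    sum_filter, sum_mul, sum_mul]
  refine congrArg (fidelity y τ u + ·)
    (congrArg₂ (· + ·) (sum_congr rfl fun j _ => ?_) (sum_congr rfl fun j _ => ?_))
  · simp only [Fin.val_succ, Nat.lt_succ_iff, Fin.val_fin_le]
    split_ifs <;> ring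
  · split_ifs <;> ring

theorem fidelity_midpoint (y τ u v : Fin (n + 1) → ℝ) :
    fidelity y τ (fun j => (u j + v j) / 2) =
      (fidelity y τ u + fidelity y τ v) / 2 - (∑ j, τ j * (u j - v j) ^ 2) / 4 := by
  simp only [fidelity, sum_div, ← sum_add_distrib, ← sum_sub_distrib]
  exact sum_congr rfl fun j _ => by ring

theorem prefixGrad_sub_succ (y τ u v : Fin (n + 1) → ℝ) (j : Fin (n + 1)) :
    prefixGrad y τ v j.succ - prefixGrad y τ u j.succ =
      prefixGrad y τ v j.castSucc - prefixGrad y τ u j.castSucc + 2 * τ j * (v j - u j) := by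
  simp only [prefixGrad, Fin.partialSum_succ]
  ring

variable {y τ u v : Fin (n + 1) → ℝ} {lam mu : ℝ}

namespace IsTVMinimizer

theorem neg (hu : IsTVMinimizer y τ lam u) : IsTVMinimizer (-y) τ lam (-u) := fun w => by
  rw [tvF_neg_neg, ← neg_neg w, tvF_neg_neg]
  exact hu (-w)

theorem prefixGrad_last (hu : IsTVMinimizer y τ lam u) :
    prefixGrad y τ u (Fin.last (n + 1)) = 0 := by
  have key (t : ℝ) : 0 ≤ (∑ j, τ j) * t ^ 2 + prefixGrad y τ u (Fin.last (n + 1)) * t := by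
    have h := hu (u + fun j => if j ≤ Fin.last n then t else 0)
    rw [tvF_eq_fidelity_add, tvF_eq_fidelity_add, fidelity_add_indicator] at h
    simp only [Fin.le_last, if_true, totalVariation_add_const, filter_true, Fin.succ_last] at h
    linarith
  have h₁ := nonneg_of_forall_quadratic_nonneg one_pos fun t _ _ => key t
  have h₂ := nonneg_of_forall_quadratic_nonneg (A := ∑ j, τ j)
    (c := -prefixGrad y τ u (Fin.last (n + 1))) one_pos fun t _ _ => by
      linarith [key (-t), neg_sq t]
  linarith

theorem prefix_shift_nonneg (hu : IsTVMinimizer y τ lam u) (i : Fin n) (t : ℝ) :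
    0 ≤ (∑ j : Fin (n + 1) with j ≤ i.castSucc, τ j) * t ^ 2
      + prefixGrad y τ u i.castSucc.succ * t
      + lam * (|u i.succ - u i.castSucc - t| - |u i.succ - u i.castSucc|) := by
  have h := hu (u + fun j => if j ≤ i.castSucc then t else 0)
  rw [tvF_eq_fidelity_add, tvF_eq_fidelity_add, fidelity_add_indicator,
    totalVariation_add_indicator] at h
  linarith

theorem abs_prefixGrad_le (hu : IsTVMinimizer y τ lam u) (hlam : 0 ≤ lam) (i : Fin n) :
    |prefixGrad y τ u i.castSucc.succ| ≤ lam := by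
  set A := ∑ j : Fin (n + 1) with j ≤ i.castSucc, τ j
  set G := prefixGrad y τ u i.castSucc.succ
  set d := u i.succ - u i.castSucc
  have jump_le (t : ℝ) : |d - t| - |d| ≤ |t| := by
    simpa using abs_sub_abs_le_abs_sub (d - t) d
  have h₁ := nonneg_of_forall_quadratic_nonneg (A := A) (c := G + lam) one_pos fun t ht _ => by
    nlinarith [hu.prefix_shift_nonneg i t, jump_le t, abs_of_pos ht]
  have h₂ := nonneg_of_forall_quadratic_nonneg (A := A) (c := lam - G) one_pos fun t ht _ => by
    nlinarith [hu.prefix_shift_nonneg i (-t), jump_le (-t), abs_of_pos ht, abs_neg t, neg_sq t]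
  exact abs_le.2 ⟨by linarith, by linarith⟩

theorem le_prefixGrad_of_lt (hu : IsTVMinimizer y τ lam u) (i : Fin n)
    (h : u i.castSucc < u i.succ) : lam ≤ prefixGrad y τ u i.castSucc.succ := by
  have := nonneg_of_forall_quadratic_nonneg (A := ∑ j : Fin (n + 1) with j ≤ i.castSucc, τ j)
    (c := prefixGrad y τ u i.castSucc.succ - lam) (sub_pos.2 h) fun t ht htd => by
      have := hu.prefix_shift_nonneg i t
      rw [abs_of_pos (by linarith), abs_of_pos (by linarith)] at this
      linarith
  linarith

theorem prefixGrad_le_neg_of_lt (hu : IsTVMinimizer y τ lam u) (i : Fin n)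
    (h : u i.succ < u i.castSucc) : prefixGrad y τ u i.castSucc.succ ≤ -lam := by
  have := nonneg_of_forall_quadratic_nonneg (A := ∑ j : Fin (n + 1) with j ≤ i.castSucc, τ j)
    (c := -prefixGrad y τ u i.castSucc.succ - lam) (sub_pos.2 h) fun t ht htd => by
      have := hu.prefix_shift_nonneg i (-t)
      rw [abs_of_neg (by linarith), abs_of_neg (by linarith)] at this
      linarith [neg_sq t]
  linarith

theorem prefixGrad_sub_le (hτ : ∀ j, 0 < τ j) (hlam : 0 ≤ lam) (hle : lam ≤ mu)
    (hu : IsTVMinimizer y τ lam u) (hv : IsTVMinimizer y τ mu v) (k : Fin (n + 2)) :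
    prefixGrad y τ v k - prefixGrad y τ u k ≤ mu - lam := by
  by_contra! hk
  obtain ⟨i, hgt, hrise, hfall⟩ := Fin.exists_left_strict_local_max
    (fun k => prefixGrad y τ v k - prefixGrad y τ u k)
    (by simp only [prefixGrad, Fin.partialSum_zero, sub_self]; linarith)
    (by simp only [hu.prefixGrad_last, hv.prefixGrad_last, sub_self]; linarith) hk
  rw [prefixGrad_sub_succ] at hrise hfall
  rw [← Fin.succ_castSucc] at hfall
  have hu_le : u i.succ ≤ u i.castSucc := not_lt.1 fun h => by
    linarith [hu.le_prefixGrad_of_lt i h, (abs_le.1 (hv.abs_prefixGrad_le (hlam.trans hle) i)).2]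
  have hv_le : v i.castSucc ≤ v i.succ := not_lt.1 fun h => by
    linarith [hv.prefixGrad_le_neg_of_lt i h, (abs_le.1 (hu.abs_prefixGrad_le hlam i)).1]
  have hlt : u i.castSucc < v i.castSucc := by nlinarith [hτ i.castSucc]
  have hle' : v i.succ ≤ u i.succ := by nlinarith [hτ i.succ]
  linarith

theorem not_lt_of_merged (hτ : ∀ j, 0 < τ j) (hlam : 0 ≤ lam) (hle : lam ≤ mu)
    (hu : IsTVMinimizer y τ lam u) (hv : IsTVMinimizer y τ mu v) (i : Fin n)
    (hui : u i.succ = u i.castSucc) : ¬ v i.castSucc < v i.succ := by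
  intro hvi
  have hedge :
      mu - lam ≤ prefixGrad y τ v i.castSucc.succ - prefixGrad y τ u i.castSucc.succ := by
    linarith [hv.le_prefixGrad_of_lt i hvi, (abs_le.1 (hu.abs_prefixGrad_le hlam i)).2]
  have hprev := prefixGrad_sub_le hτ hlam hle hu hv i.castSucc.castSucc
  have hnext := prefixGrad_sub_le hτ hlam hle hu hv i.succ.succ
  rw [prefixGrad_sub_succ] at hedge hnext
  rw [← Fin.succ_castSucc, prefixGrad_sub_succ] at hnext
  have hu_le : u i.castSucc ≤ v i.castSucc := by nlinarith [hτ i.castSucc]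
  have hv_le : v i.succ ≤ u i.succ := by nlinarith [hτ i.succ]
  linarith

theorem eq_of_merged (hτ : ∀ j, 0 < τ j) (hlam : 0 ≤ lam) (hle : lam ≤ mu)
    (hu : IsTVMinimizer y τ lam u) (hv : IsTVMinimizer y τ mu v) (i : Fin n)
    (hui : u i.succ = u i.castSucc) : v i.succ = v i.castSucc := by
  refine le_antisymm (not_lt.1 (hu.not_lt_of_merged hτ hlam hle hv i hui)) (not_lt.1 ?_)
  simpa using hu.neg.not_lt_of_merged hτ hlam hle hv.neg i (by simp [hui])

theorem sum_sq_sub_le (hlam : 0 ≤ lam) (hu : IsTVMinimizer y τ lam u) (v : Fin (n + 1) → ℝ) :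
    ∑ j, τ j * (u j - v j) ^ 2 ≤ 2 * (tvF n y τ lam v - tvF n y τ lam u) := by
  have hmid := hu fun j => (u j + v j) / 2
  rw [tvF_eq_fidelity_add, tvF_eq_fidelity_add, fidelity_midpoint] at hmid
  have := mul_le_mul_of_nonneg_left (totalVariation_midpoint_le u v) hlam
  rw [tvF_eq_fidelity_add, tvF_eq_fidelity_add]
  linarith

theorem sum_sq_sub_le_of_le (hlam : 0 ≤ lam) (hle : lam ≤ mu) (hu : IsTVMinimizer y τ lam u)
    (hv : IsTVMinimizer y τ mu v) :
    ∑ j, τ j * (u j - v j) ^ 2 ≤ 2 * (mu - lam) * totalVariation u := by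
  have h₁ := hu.sum_sq_sub_le hlam v
  have h₂ := hv u
  simp only [tvF_eq_fidelity_add] at h₁ h₂
  nlinarith [mul_nonneg (sub_nonneg.2 hle) (totalVariation_nonneg v)]

theorem sq_jump_le_of_merged (hτ : ∀ j, 0 < τ j) (hlam : 0 ≤ lam) (hle : lam ≤ mu)
    (hu : IsTVMinimizer y τ lam u) (hv : IsTVMinimizer y τ mu v) (i : Fin n)
    (hvi : v i.succ = v i.castSucc) :
    min (τ i.castSucc) (τ i.succ) * (u i.succ - u i.castSucc) ^ 2 ≤
      8 * (mu - lam) * totalVariation u := by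
  have hsum := hu.sum_sq_sub_le_of_le hlam hle hv
  have hterm (j : Fin (n + 1)) : τ j * (u j - v j) ^ 2 ≤ ∑ j, τ j * (u j - v j) ^ 2 :=
    single_le_sum (f := fun j => τ j * (u j - v j) ^ 2)
      (fun j _ => mul_nonneg (hτ j).le (sq_nonneg _)) (mem_univ j)
  have h₁ := hterm i.castSucc
  have h₂ := hterm i.succ
  have hm₁ := min_le_left (τ i.castSucc) (τ i.succ)
  have hm₂ := min_le_right (τ i.castSucc) (τ i.succ)
  have hm₀ : 0 ≤ min (τ i.castSucc) (τ i.succ) := le_min (hτ _).le (hτ _).le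
  calc min (τ i.castSucc) (τ i.succ) * (u i.succ - u i.castSucc) ^ 2
      ≤ min (τ i.castSucc) (τ i.succ) * (2 * (u i.succ - v i.succ) ^ 2
          + 2 * (u i.castSucc - v i.castSucc) ^ 2) := by
        have hd : u i.succ - u i.castSucc =
            (u i.succ - v i.succ) - (u i.castSucc - v i.castSucc) := by
          rw [hvi]; ring
        gcongr
        rw [hd]
        nlinarith [sq_nonneg (u i.succ - v i.succ + (u i.castSucc - v i.castSucc))]
    _ ≤ 2 * (τ i.succ * (u i.succ - v i.succ) ^ 2)
          + 2 * (τ i.castSucc * (u i.castSucc - v i.castSucc) ^ 2) := by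
        nlinarith [sq_nonneg (u i.succ - v i.succ), sq_nonneg (u i.castSucc - v i.castSucc)]
    _ ≤ 8 * (mu - lam) * totalVariation u := by linarith

end IsTVMinimizer

theorem exists_isTVMinimizer_const (hτ : ∀ j, 0 < τ j) :
    ∃ lam, 0 ≤ lam ∧ ∃ c : ℝ, IsTVMinimizer y τ lam fun _ => c := by
  have hT : 0 < ∑ j, τ j := sum_pos (fun j _ => hτ j) univ_nonempty
  set μ := (∑ j, τ j * y j) / ∑ j, τ j
  have hmean : ∑ j, τ j * (y j - μ) = 0 := by
    simp only [mul_sub, sum_sub_distrib, ← sum_mul, μ, mul_div_cancel₀ _ hT.ne', sub_self]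
  refine ⟨2 * ∑ j, τ j * |y j - μ|,
    mul_nonneg zero_le_two (sum_nonneg fun j _ => mul_nonneg (hτ j).le (abs_nonneg _)), μ,
    fun w => ?_⟩
  have hcross : ∑ j, τ j * (y j - μ) * (w j - μ) ≤
      (∑ j, τ j * |y j - μ|) * totalVariation w := calc
    ∑ j, τ j * (y j - μ) * (w j - μ) = ∑ j, τ j * (y j - μ) * (w j - w 0) := by
      rw [← sub_eq_zero, ← sum_sub_distrib]
      simp only [← mul_sub, sub_sub_sub_cancel_left, ← sum_mul, hmean, zero_mul]
    _ ≤ ∑ j, τ j * |y j - μ| * totalVariation w := sum_le_sum fun j _ => by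
      rw [mul_assoc, mul_assoc]
      refine mul_le_mul_of_nonneg_left ?_ (hτ j).le
      calc (y j - μ) * (w j - w 0) ≤ |y j - μ| * |w j - w 0| :=
            (le_abs_self _).trans_eq (abs_mul _ _)
        _ ≤ |y j - μ| * totalVariation w := by gcongr; exact abs_sub_le_totalVariation w j
    _ = _ := (sum_mul ..).symm
  have hfid : fidelity y τ (fun _ => μ) - 2 * ∑ j, τ j * (y j - μ) * (w j - μ) ≤
      fidelity y τ w := by
    rw [fidelity, fidelity, mul_sum, ← sum_sub_distrib]
    exact sum_le_sum fun j _ => by nlinarith [mul_nonneg (hτ j).le (sq_nonneg (w j - μ))]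
  have hconst : totalVariation (fun _ : Fin (n + 1) => μ) = 0 := by simp [totalVariation]
  rw [tvF_eq_fidelity_add, tvF_eq_fidelity_add, hconst]
  nlinarith [totalVariation_nonneg w]

end TVDenoising

open TVDenoising

/-- For every adjacent pair `(i, i+1)` there is a merge value `λ°_i ≥ 0` such that,
for every `λ ≥ 0`, the minimizer of `F(·, y, τ, λ)` takes the same value at `i`
and `i+1` if and only if `λ ≥ λ°_i` : the set of `λ` at which the two points are
merged is a closed half-line. -/
theorem tv_merge_halfLine (n : ℕ) (y τ : Fin (n + 1) → ℝ) (hτ : ∀ i, 0 < τ i)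
    (i : Fin n) :
    ∃ lam₀ : ℝ, 0 ≤ lam₀ ∧ ∀ lam : ℝ, 0 ≤ lam →
      ∀ u : Fin (n + 1) → ℝ,
        (∀ v : Fin (n + 1) → ℝ, tvF n y τ lam u ≤ tvF n y τ lam v) →
          (u i.succ = u i.castSucc ↔ lam₀ ≤ lam) := by
  set S := {lam | 0 ≤ lam ∧ ∃ u, IsTVMinimizer y τ lam u ∧ u i.succ = u i.castSucc}
  have hS : S.Nonempty := by
    obtain ⟨lam, hlam, c, hc⟩ := exists_isTVMinimizer_const (y := y) hτ
    exact ⟨lam, hlam, _, hc, rfl⟩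
  have hSbdd : BddBelow S := ⟨0, fun _ h => h.1⟩
  refine ⟨sInf S, le_csInf hS fun _ h => h.1, fun lam hlam u hu =>
    ⟨fun hui => csInf_le hSbdd ⟨hlam, u, hu, hui⟩, fun hle => ?_⟩⟩
  by_contra hne
  have hjump : u i.succ - u i.castSucc ≠ 0 := sub_ne_zero.2 hne
  have hTV : 0 < totalVariation u := (abs_pos.2 hjump).trans_le
    (single_le_sum (f := fun e => |u e.succ - u e.castSucc|) (fun _ _ => abs_nonneg _) (mem_univ i))
  set gap :=
    min (τ i.castSucc) (τ i.succ) * (u i.succ - u i.castSucc) ^ 2 / (8 * totalVariation u)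
  have hgap : 0 < gap := by
    have := hτ i.castSucc
    have := hτ i.succ
    positivity
  have hS_ge : ∀ mu ∈ S, lam + gap ≤ mu := by
    rintro mu ⟨hmu, v, hv, hvi⟩
    have hlt : lam < mu :=
      lt_of_not_ge fun h => hne (IsTVMinimizer.eq_of_merged hτ hmu h hv hu i hvi)
    have := IsTVMinimizer.sq_jump_le_of_merged hτ hlam hlt.le hu hv i hvi
    rw [← le_sub_iff_add_le', div_le_iff₀ (by positivity)]
    linarith
  linarith [le_csInf hS hS_ge]
end

section
/- (Theorem 1: influence of a new sample at the end.) Let m ≥ 1, y ∈ ℝ^m, τ ∈ ℝ^m with τ_i > 0, λ ≥ 0, and let u* be the unique minimizer of F(·, y, τ, λ), with segments N*_1, …, N*_{K*}, segment levels v*_1, …, v*_{K*}, and i^{j}_1 the first index of the j-th segment. Append a new sample: let y⁺ = (y_1, …, y_m, y_{m+1}) ∈ ℝ^{m+1} and τ⁺ = (τ_1, …, τ_m, τ_{m+1}) with τ_{m+1} > 0, and let û be the unique minimizer of F(·, y⁺, τ⁺, λ). If there exists an index j ∈ {2, …, K*} such that sign(v*_{j−1} − v*_j) = sign(v*_{K*}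 − y_{m+1}), then, taking j to be the largest such index, û_i = u*_i for every i < i^{j}_1. -/
open Finset Filter Topology

lemma abs_max_sub_max_add_abs_min_sub_min_le {α : Type*} [AddCommGroup α] [LinearOrder α]
    [IsOrderedAddMonoid α] (a b c d : α) :
    |max a c - max b d| + |min a c - min b d| ≤ |a - b| + |c - d| := by
  rcases le_total a c with h₁ | h₁ <;> rcases le_total b d with h₂ | h₂ <;>
    simp only [max_eq_left, max_eq_right, min_eq_left, min_eq_right, h₁, h₂] <;> grind

lemma nonneg_of_forall_mul_mul_add_nonneg {A c δ : ℝ} (hδ : 0 < δ)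
    (h : ∀ t ∈ Set.Ioo 0 δ, 0 ≤ t * (t * A + c)) : 0 ≤ c := by
  have hlim : Tendsto (fun t => t * A + c) (𝓝[>] 0) (𝓝 c) := by
    have : Tendsto (fun t : ℝ => t * A + c) (𝓝 0) (𝓝 (0 * A + c)) :=
      (continuous_id.mul continuous_const |>.add continuous_const).tendsto 0
    simpa using this.mono_left nhdsWithin_le_nhds
  refine ge_of_tendsto hlim ?_
  filter_upwards [Ioo_mem_nhdsGT hδ] with t ht
  exact nonneg_of_mul_nonneg_right (h t ht) ht.1

def IsTVMinimizer (n : ℕ) (y τ : Fin (n + 1) → ℝ) (lam : ℝ) (u : Fin (n + 1) → ℝ) : Prop :=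
  ∀ w, tvF n y τ lam u ≤ tvF n y τ lam w

/-- At a minimizer `x`, twice this is the dual variable of the jump `x_{q+1} - x_q`. -/
def prefixResidual {m : ℕ} (y τ x : Fin m → ℝ) (q : Fin m) : ℝ :=
  ∑ k ≤ q, τ k * (x k - y k)

section

variable {n : ℕ} {y y' τ : Fin (n + 1) → ℝ} {lam : ℝ}

lemma tvF_sup_add_tvF_inf_le (hτ : ∀ i, 0 ≤ τ i) (hlam : 0 ≤ lam) (hy : y' ≤ y)
    (u w : Fin (n + 1) → ℝ) :
    tvF n y τ lam (u ⊔ w) + tvF n y' τ lam (u ⊓ w) ≤ tvF n y τ lam u + tvF n y' τ lam w := by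
  have hdata : ∀ i, τ i * (y i - max (u i) (w i)) ^ 2 + τ i * (y' i - min (u i) (w i)) ^ 2 ≤
      τ i * (y i - u i) ^ 2 + τ i * (y' i - w i) ^ 2 := by
    intro i
    rcases le_total (u i) (w i) with h | h
    · rw [max_eq_right h, min_eq_left h]
      nlinarith [mul_nonneg (mul_nonneg (hτ i) (sub_nonneg.2 (hy i))) (sub_nonneg.2 h)]
    · rw [max_eq_left h, min_eq_right h]
  have hjump : ∀ i : Fin n,
      |max (u i.succ) (w i.succ) - max (u i.castSucc) (w i.castSucc)| +
        |min (u i.succ) (w i.succ) - min (u i.castSucc) (w i.castSucc)| ≤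
      |u i.succ - u i.castSucc| + |w i.succ - w i.castSucc| :=
    fun i => abs_max_sub_max_add_abs_min_sub_min_le _ _ _ _
  have hD := sum_le_sum fun i (_ : i ∈ univ) => hdata i
  have hJ := mul_le_mul_of_nonneg_left (sum_le_sum fun i (_ : i ∈ univ) => hjump i) hlam
  simp only [sum_add_distrib, mul_add] at hD hJ
  simp only [tvF, Pi.sup_apply, Pi.inf_apply]
  linarith

lemma tvF_midpoint_add_le (hlam : 0 ≤ lam) (u w : Fin (n + 1) → ℝ) :
    tvF n y τ lam (fun i => (u i + w i) / 2) + (∑ i, τ i * (u i - w i) ^ 2) / 4 ≤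
      (tvF n y τ lam u + tvF n y τ lam w) / 2 := by
  have hD : ∑ i, τ i * (y i - (u i + w i) / 2) ^ 2 + (∑ i, τ i * (u i - w i) ^ 2) / 4 =
      (∑ i, τ i * (y i - u i) ^ 2 + ∑ i, τ i * (y i - w i) ^ 2) / 2 := by
    simp only [sum_div, ← sum_add_distrib]
    exact sum_congr rfl fun i _ => by ring
  have hJ : ∑ i : Fin n, |(u i.succ + w i.succ) / 2 - (u i.castSucc + w i.castSucc) / 2| ≤
      (∑ i : Fin n, |u i.succ - u i.castSucc| + ∑ i : Fin n, |w i.succ - w i.castSucc|) / 2 := by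
    simp only [sum_div, ← sum_add_distrib]
    refine sum_le_sum fun i _ => ?_
    rw [show (u i.succ + w i.succ) / 2 - (u i.castSucc + w i.castSucc) / 2 =
      ((u i.succ - u i.castSucc) + (w i.succ - w i.castSucc)) / 2 by ring, abs_div,
      abs_two]
    gcongr
    exact abs_add_le _ _
  have := mul_le_mul_of_nonneg_left hJ hlam
  simp only [tvF]
  linarith

namespace IsTVMinimizer

variable {u w : Fin (n + 1) → ℝ}

lemma eq_of_tvF_le (hu : IsTVMinimizer n y τ lam u) (hτ : ∀ i, 0 < τ i) (hlam : 0 ≤ lam)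
    (hw : tvF n y τ lam w ≤ tvF n y τ lam u) : w = u := by
  have hnonneg : ∀ i ∈ univ, 0 ≤ τ i * (u i - w i) ^ 2 :=
    fun i _ => mul_nonneg (hτ i).le (sq_nonneg _)
  have hmid := tvF_midpoint_add_le (y := y) (τ := τ) hlam u w
  have hsum : ∑ i, τ i * (u i - w i) ^ 2 = 0 :=
    le_antisymm (by linarith [hu fun i => (u i + w i) / 2]) (sum_nonneg hnonneg)
  funext i
  have hi := (sum_eq_zero_iff_of_nonneg hnonneg).1 hsum i (mem_univ i)
  have := pow_eq_zero_iff two_ne_zero |>.1 <| (mul_eq_zero.1 hi).resolve_left (hτ i).ne'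
  linarith

lemma le_of_data_le (hu : IsTVMinimizer n y τ lam u) (hw : IsTVMinimizer n y' τ lam w)
    (hτ : ∀ i, 0 < τ i) (hlam : 0 ≤ lam) (hy : y' ≤ y) : w ≤ u := by
  have hexch := tvF_sup_add_tvF_inf_le (fun i => (hτ i).le) hlam hy u w
  have hinf : u ⊓ w = w := hw.eq_of_tvF_le hτ hlam (by linarith [hu (u ⊔ w)])
  exact inf_eq_right.1 hinf

end IsTVMinimizer

end

section

variable {n : ℕ} {y τ : Fin (n + 1) → ℝ} {lam : ℝ}

lemma tvF_neg (u : Fin (n + 1) → ℝ) : tvF n (-y) τ lam (-u) = tvF n y τ lam u := by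
  simp only [tvF, Pi.neg_apply]
  congr 1
  · exact sum_congr rfl fun i _ => by ring
  · simp_rw [← neg_sub', abs_neg]

lemma IsTVMinimizer.neg {u : Fin (n + 1) → ℝ} (hu : IsTVMinimizer n y τ lam u) :
    IsTVMinimizer n (-y) τ lam (-u) := fun w => by
  rw [tvF_neg, ← neg_neg w, tvF_neg]
  exact hu (-w)

lemma tvF_snoc (b s : ℝ) (w : Fin (n + 2) → ℝ) :
    tvF (n + 1) (Fin.snoc y b) (Fin.snoc τ s) lam w =
      tvF n y τ lam (Fin.init w) +
        (s * (b - w (Fin.last _)) ^ 2 + lam * |w (Fin.last _) - w (Fin.last n).castSucc|) := by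
  simp only [tvF, Fin.sum_univ_castSucc (n := n + 1), Fin.sum_univ_castSucc (n := n),
    Fin.snoc_castSucc, Fin.snoc_last, Fin.init, Fin.succ_castSucc, Fin.succ_last]
  ring

lemma IsTVMinimizer.snoc_last {u : Fin (n + 1) → ℝ} (hu : IsTVMinimizer n y τ lam u)
    {s : ℝ} (hs : 0 ≤ s) (hlam : 0 ≤ lam) :
    IsTVMinimizer (n + 1) (Fin.snoc y (u (Fin.last n))) (Fin.snoc τ s) lam
      (Fin.snoc u (u (Fin.last n))) := fun w => by
  rw [tvF_snoc, tvF_snoc]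
  simp only [Fin.init_snoc, Fin.snoc_last, Fin.snoc_castSucc, sub_self, abs_zero, ne_eq,
    OfNat.ofNat_ne_zero, not_false_eq_true, zero_pow, mul_zero, add_zero]
  exact le_add_of_le_of_nonneg (hu _)
    (add_nonneg (mul_nonneg hs (sq_nonneg _)) (mul_nonneg hlam (abs_nonneg _)))

lemma tvF_add_prefix (x : Fin (n + 1) → ℝ) (p : Fin n) (t : ℝ) :
    tvF n y τ lam (fun k => if k ≤ p.castSucc then x k + t else x k) =
      tvF n y τ lam x + (t ^ 2 * ∑ k ≤ p.castSucc, τ k + 2 * t * prefixResidual y τ x p.castSucc)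
        + lam * (|x p.succ - x p.castSucc - t| - |x p.succ - x p.castSucc|) := by
  have hD : ∀ k, τ k * (y k - if k ≤ p.castSucc then x k + t else x k) ^ 2 =
      τ k * (y k - x k) ^ 2 +
        if k ∈ Iic p.castSucc then t ^ 2 * τ k + 2 * t * (τ k * (x k - y k)) else 0 := by
    intro k
    simp only [mem_Iic]
    split_ifs <;> ring
  have hJ : ∀ i : Fin n,
      |(if i.succ ≤ p.castSucc then x i.succ + t else x i.succ) -
          (if i.castSucc ≤ p.castSucc then x i.castSucc + t else x i.castSucc)| =
        |x i.succ - x i.castSucc| +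
          if i = p then |x p.succ - x p.castSucc - t| - |x p.succ - x p.castSucc| else 0 := by
    intro i
    rcases lt_trichotomy i p with h | rfl | h
    · simp [h, h.le, h.ne]
    · simp [sub_add_eq_sub_sub]
    · simp [not_lt_of_gt h, not_le_of_gt h, ne_of_gt h]
  simp only [tvF, hD, hJ, sum_add_distrib, sum_ite_mem, univ_inter, sum_ite_eq', mem_univ,
    if_true, prefixResidual, ← mul_sum]
  ring

namespace IsTVMinimizer

variable {x : Fin (n + 1) → ℝ}

lemma two_mul_prefixResidual_le (hx : IsTVMinimizer n y τ lam x) (hlam : 0 ≤ lam) (p : Fin n) :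
    2 * prefixResidual y τ x p.castSucc ≤ lam := by
  suffices 0 ≤ lam - 2 * prefixResidual y τ x p.castSucc by linarith
  refine nonneg_of_forall_mul_mul_add_nonneg (A := ∑ k ≤ p.castSucc, τ k) one_pos fun t ht => ?_
  have hshift := hx fun k => if k ≤ p.castSucc then x k + -t else x k
  rw [tvF_add_prefix] at hshift
  have habs : |x p.succ - x p.castSucc - -t| - |x p.succ - x p.castSucc| ≤ t := by
    simpa [abs_of_pos ht.1] using abs_sub_abs_le_abs_sub (x p.succ - x p.castSucc - -t)
      (x p.succ - x p.castSucc)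
  linarith [mul_le_mul_of_nonneg_left habs hlam]

lemma le_two_mul_prefixResidual_of_lt (hx : IsTVMinimizer n y τ lam x) {p : Fin n}
    (hjump : x p.castSucc < x p.succ) :
    lam ≤ 2 * prefixResidual y τ x p.castSucc := by
  suffices 0 ≤ 2 * prefixResidual y τ x p.castSucc - lam by linarith
  refine nonneg_of_forall_mul_mul_add_nonneg (A := ∑ k ≤ p.castSucc, τ k) (sub_pos.2 hjump)
    fun t ht => ?_
  have hshift := hx fun k => if k ≤ p.castSucc then x k + t else x k
  rw [tvF_add_prefix, abs_of_pos (by linarith [ht.2]), abs_of_pos (sub_pos.2 hjump)] at hshift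
  linarith

end IsTVMinimizer

end

lemma prefixResidual_snoc {n : ℕ} (y τ : Fin (n + 1) → ℝ) (b s : ℝ) (x : Fin (n + 2) → ℝ)
    (q : Fin (n + 1)) :
    prefixResidual (Fin.snoc y b) (Fin.snoc τ s) x q.castSucc =
      prefixResidual y τ (Fin.init x) q := by
  simp [prefixResidual, Fin.sum_Iic_castSucc, Fin.init]

lemma eqOn_Iic_of_prefixResidual_le {m : ℕ} {y τ x x' : Fin m → ℝ} (hτ : ∀ k, 0 < τ k)
    (hle : x ≤ x') {q : Fin m} (hres : prefixResidual y τ x' q ≤ prefixResidual y τ x q) :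
    ∀ k ≤ q, x' k = x k := by
  have hnonneg : ∀ k ∈ Iic q, 0 ≤ τ k * (x' k - x k) :=
    fun k _ => mul_nonneg (hτ k).le (sub_nonneg.2 (hle k))
  have hsum : ∑ k ≤ q, τ k * (x' k - x k) = 0 := by
    refine le_antisymm ?_ (sum_nonneg hnonneg)
    have : ∑ k ≤ q, τ k * (x' k - x k) =
        prefixResidual y τ x' q - prefixResidual y τ x q := by
      simp only [prefixResidual, ← sum_sub_distrib]
      exact sum_congr rfl fun k _ => by ring
    linarith
  intro k hk
  have := (sum_eq_zero_iff_of_nonneg hnonneg).1 hsum k (mem_Iic.2 hk)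
  linarith [(mul_eq_zero.1 this).resolve_left (hτ k).ne']

section

variable {n : ℕ} {y τ : Fin (n + 1) → ℝ} {lam : ℝ} {u : Fin (n + 1) → ℝ} {uh : Fin (n + 2) → ℝ}
  {b s : ℝ}

lemma forall_snoc_pos (hτ : ∀ i, 0 < τ i) (hs : 0 < s) :
    ∀ i, 0 < (Fin.snoc τ s : Fin (n + 2) → ℝ) i :=
  Fin.lastCases (by simpa using hs) (by simpa using hτ)

theorem IsTVMinimizer.snoc_eq_of_lt (hu : IsTVMinimizer n y τ lam u)
    (huh : IsTVMinimizer (n + 1) (Fin.snoc y b) (Fin.snoc τ s) lam uh)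
    (hτ : ∀ i, 0 < τ i) (hs : 0 < s) (hlam : 0 ≤ lam)
    {p : Fin n} (hjump : u p.castSucc < u p.succ) (hb : u (Fin.last n) ≤ b) :
    ∀ k ≤ p.castSucc, uh k.castSucc = u k := by
  have hu' := hu.snoc_last hs.le hlam
  have hle : Fin.snoc u (u (Fin.last n)) ≤ uh :=
    huh.le_of_data_le hu' (forall_snoc_pos hτ hs) hlam <|
      Fin.lastCases (by simpa using hb) (by simp)
  have hjump' : (Fin.snoc u (u (Fin.last n)) : Fin (n + 2) → ℝ) p.castSucc.castSucc <
      (Fin.snoc u (u (Fin.last n)) : Fin (n + 2) → ℝ) p.castSucc.succ := by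
    rwa [Fin.succ_castSucc, Fin.snoc_castSucc, Fin.snoc_castSucc]
  have hres : prefixResidual y τ (Fin.init uh) p.castSucc ≤ prefixResidual y τ u p.castSucc := by
    have h₁ := huh.two_mul_prefixResidual_le hlam p.castSucc
    have h₂ := hu'.le_two_mul_prefixResidual_of_lt hjump'
    rw [prefixResidual_snoc] at h₁ h₂
    rw [Fin.init_snoc] at h₂
    linarith
  have hinit : u ≤ Fin.init uh := fun k => by
    have := hle k.castSucc
    rwa [Fin.snoc_castSucc] at this
  exact eqOn_Iic_of_prefixResidual_le hτ hinit hres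

theorem IsTVMinimizer.snoc_eq_of_sign_eq (hu : IsTVMinimizer n y τ lam u)
    (huh : IsTVMinimizer (n + 1) (Fin.snoc y b) (Fin.snoc τ s) lam uh)
    (hτ : ∀ i, 0 < τ i) (hs : 0 < s) (hlam : 0 ≤ lam) {p : Fin n}
    (hsign : Real.sign (u p.castSucc - u p.succ) = Real.sign (u (Fin.last n) - b)) :
    ∀ k ≤ p.castSucc, uh k.castSucc = u k := by
  have hprod := Real.sign_mul_nonneg (u (Fin.last n) - b)
  rcases lt_trichotomy (u p.castSucc) (u p.succ) with hlt | heq | hgt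
  · rw [← hsign, Real.sign_of_neg (sub_neg.2 hlt)] at hprod
    exact hu.snoc_eq_of_lt huh hτ hs hlam hlt (by linarith)
  · rw [heq, sub_self, Real.sign_zero, eq_comm, Real.sign_eq_zero_iff, sub_eq_zero] at hsign
    subst hsign
    have huh_eq := (hu.snoc_last hs.le hlam).eq_of_tvF_le (forall_snoc_pos hτ hs) hlam (huh _)
    intro k _
    rw [huh_eq, Fin.snoc_castSucc]
  · rw [← hsign, Real.sign_of_pos (sub_pos.2 hgt)] at hprod
    have huh_neg : IsTVMinimizer (n + 1) (Fin.snoc (-y) (-b)) (Fin.snoc τ s) lam (-uh) := by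
      rw [show Fin.snoc (-y) (-b) = -(Fin.snoc y b : Fin (n + 2) → ℝ) from
        (Fin.comp_snoc Neg.neg y b).symm]
      exact huh.neg
    intro k hk
    simpa using hu.neg.snoc_eq_of_lt huh_neg hτ hs hlam (neg_lt_neg hgt) (by simp; linarith) k hk

end

/-- Segment `j : Fin K` of `u` is the index range `[start j.castSucc, start j.succ)`, with level
`v j`; segments are numbered from `0`, so `1 ≤ j` is the paper's `j ∈ {2, …, K*}`. -/
theorem tv_new_sample_influence (n : ℕ) (y τ : Fin (n + 1) → ℝ)
    (hτ : ∀ i, 0 < τ i) (lam : ℝ) (hlam : 0 ≤ lam)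
    (u : Fin (n + 1) → ℝ)
    (hu : ∀ w : Fin (n + 1) → ℝ, tvF n y τ lam u ≤ tvF n y τ lam w)
    (K : ℕ) (hK : 0 < K)
    (start : Fin (K + 1) → Fin (n + 2)) (hmono : StrictMono start)
    (hstartlast : start (Fin.last K) = Fin.last (n + 1))
    (v : Fin K → ℝ)
    (hseg : ∀ (j : Fin K) (i : ℕ), (start j.castSucc : ℕ) ≤ i →
      ∀ hi : i < (start j.succ : ℕ),
        u ⟨i, by have := (start j.succ).isLt; omega⟩ = v j)
    (ynew τnew : ℝ) (hτnew : 0 < τnew)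
    (uh : Fin (n + 2) → ℝ)
    (huh : ∀ w : Fin (n + 2) → ℝ,
      tvF (n + 1) (Fin.snoc y ynew) (Fin.snoc τ τnew) lam uh ≤
        tvF (n + 1) (Fin.snoc y ynew) (Fin.snoc τ τnew) lam w)
    (j : Fin K) (hj1 : 1 ≤ (j : ℕ))
    (hsign : Real.sign (v ⟨(j : ℕ) - 1, by have := j.isLt; omega⟩ - v j) =
      Real.sign (v ⟨K - 1, by omega⟩ - ynew)) :
    ∀ i : ℕ, ∀ hi : i < (start j.castSucc : ℕ),
      uh ⟨i, by have := (start j.castSucc).isLt; omega⟩ =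
        u ⟨i, by have := (start j.castSucc).isLt; omega⟩ := by
  set a : ℕ := (start j.castSucc : ℕ)
  have ha_pos : 0 < a := (Nat.zero_le _).trans_lt <| hmono (show 0 < j.castSucc by
    rw [Fin.lt_def]; simp only [Fin.val_zero, Fin.val_castSucc]; omega)
  have ha_le : a < n + 1 := by
    have := hmono (Fin.castSucc_lt_last j)
    rwa [hstartlast, Fin.lt_def, Fin.val_last] at this
  let p : Fin n := ⟨a - 1, by omega⟩
  let jprev : Fin K := ⟨j - 1, by omega⟩
  let jlast : Fin K := ⟨K - 1, by omega⟩
  have hjprev : jprev.succ = j.castSucc := Fin.ext (by simp [jprev]; omega)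
  have hjlast : jlast.succ = Fin.last K := Fin.ext (by simp [jlast]; omega)
  have hup : u p.castSucc = v jprev := by
    have := hmono jprev.castSucc_lt_succ
    rw [hjprev] at this
    exact hseg jprev (a - 1) (by simp only [Fin.lt_def] at this; omega) (by rw [hjprev]; omega)
  have hus : u p.succ = v j := by
    rw [show p.succ = ⟨a, by omega⟩ from Fin.ext (by simp [p]; omega)]
    exact hseg j a le_rfl (hmono j.castSucc_lt_succ)
  have hul : u (Fin.last n) = v jlast := by
    have := hmono jlast.castSucc_lt_succ
    rw [hjlast, hstartlast] at this
    exact hseg jlast n (by simp only [Fin.lt_def, Fin.val_last] at this; omega)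
      (by simp [hjlast, hstartlast])
  have hprefix := IsTVMinimizer.snoc_eq_of_sign_eq hu huh hτ hτnew hlam (p := p)
    (by rw [hup, hus, hul]; exact hsign)
  intro i hi
  exact hprefix ⟨i, by omega⟩ (by simp only [Fin.le_def, Fin.val_castSucc, p]; omega)
end
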